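/- arXiv:2207.11137 — 7 statements merged into one kernel-verified Lean document; each statement's English description precedes it below -/
import Mathlib

section
/- Let (Ω, 𝔽, ℙ) be a probability space carrying, for each n, real random variables E_n, F_n, G_n, Φ̂_n, Ψ̂_n. Let Φ₁ > 0, Ψ > 0, ρ ∈ (−1,1), C̃, Δ̃ ∈ ℝ, and let (d_n) be a sequence of real numbers with d_n → 0. Assume: (i) the laws of the pairs (E_n, F_n) converge weakly to the law of (√Φ₁·Z₁, √Ψ·(ρZ₁ + √(1−ρ²)·Z₂)), where Z₁, Z₂ are independent standard normal random variables (i.e., the centered bivariate normal with variances Φ₁, Ψ and correlation ρ); (ii) d_n·G_n → C̃ in probability; (iii) Φ̂_n → Φ₁ and Ψ̂_n → Ψ in probability. Set Δ_n := Δ̃·d_n, AR_n := (E_n + 2Δ_nF_n + Δ_n²G_n)/√Φ̂_n, and LM_n := (F_n + Δ_nG_n)/√Ψ̂_n. Then the laws of the pairs (AR_n, LM_n) converge weakly to the law of (Z₁, Δ̃C̃/√Ψ + ρZ₁ + √(1−ρ²)·Z₂), i.e., the bivariate normal with mean (0, Δ̃C̃/√Ψ), unit variances, and correlation ρ. -/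
/-!
Write both statistics as one map of `(E_n, F_n)` and the nuisance vector
`(d_n G_n, d_n, Φ̂_n, Ψ̂_n)`, with the variance estimates floored at half their limits so that
the map is continuous everywhere. The nuisance vector converges in probability to the constant
`(C̃, 0, Φ₁, Ψ)`, so Slutsky's theorem gives the limit law of the floored statistics; the floors
are inactive with probability tending to one, so the actual statistics share that limit. At the
limit point the term `2Δ_n F_n = 2Δ̃ d_n F_n` vanishes while `Δ_n G_n = Δ̃ (d_n G_n) → Δ̃C̃`,
which is the mean shift `Δ̃C̃/√Ψ` of the LM component.
-/

open MeasureTheory ProbabilityTheory Filter BoundedContinuousFunction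
open scoped ProbabilityTheory Topology

namespace MeasureTheory

section

variable {ι E Ω' : Type*} {Ω : ι → Type*} {m : ∀ i, MeasurableSpace (Ω i)}
  {μ : (i : ι) → Measure (Ω i)} [∀ i, IsProbabilityMeasure (μ i)]
  {m' : MeasurableSpace Ω'} {μ' : Measure Ω'} [IsProbabilityMeasure μ']
  {mE : MeasurableSpace E} [TopologicalSpace E] [OpensMeasurableSpace E]
  {X : (i : ι) → Ω i → E} {Z : Ω' → E} {l : Filter ι}

theorem tendstoInDistribution_iff_tendsto_integral (hX : ∀ i, AEMeasurable (X i) (μ i))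
    (hZ : AEMeasurable Z μ') :
    TendstoInDistribution X l Z μ μ' ↔ ∀ f : E →ᵇ ℝ,
      Tendsto (fun i ↦ ∫ ω, f (X i ω) ∂μ i) l (𝓝 (∫ ω, f (Z ω) ∂μ')) := by
  refine ⟨fun h f ↦ ?_, fun h ↦ ⟨hX, hZ, ?_⟩⟩
  · have := ProbabilityMeasure.tendsto_iff_forall_integral_tendsto.1 h.tendsto f
    simpa [integral_map (hX _) f.continuous.aestronglyMeasurable,
      integral_map hZ f.continuous.aestronglyMeasurable] using this
  · refine ProbabilityMeasure.tendsto_iff_forall_integral_tendsto.2 fun f ↦ ?_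
    simpa [integral_map (hX _) f.continuous.aestronglyMeasurable,
      integral_map hZ f.continuous.aestronglyMeasurable] using h f

end

theorem TendstoInDistribution.congr_of_tendsto_measure_ne {ι E Ω Ω' : Type*}
    {m : MeasurableSpace Ω} {μ : Measure Ω} [IsProbabilityMeasure μ]
    {m' : MeasurableSpace Ω'} {μ' : Measure Ω'} [IsProbabilityMeasure μ']
    {mE : MeasurableSpace E} [SeminormedAddCommGroup E] [SecondCountableTopology E] [BorelSpace E]
    {l : Filter ι} [l.IsCountablyGenerated] {X Y : ι → Ω → E} {Z : Ω' → E}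
    (hXZ : TendstoInDistribution X l Z (fun _ ↦ μ) μ') (hY : ∀ i, AEMeasurable (Y i) μ)
    (hXY : Tendsto (fun i ↦ μ {ω | Y i ω ≠ X i ω}) l (𝓝 0)) :
    TendstoInDistribution Y l Z (fun _ ↦ μ) μ' := by
  refine tendstoInDistribution_of_tendstoInMeasure_sub Y Z hXZ (fun ε hε ↦ ?_) hY
  refine tendsto_of_tendsto_of_tendsto_of_le_of_le tendsto_const_nhds hXY (fun _ ↦ zero_le)
    fun i ↦ measure_mono fun ω hω ↦ ?_
  intro hYX
  simp only [hYX, Pi.sub_apply, sub_self, Pi.zero_apply, Set.mem_ofPred_eq, edist_self] at hω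
  exact hε.not_ge hω

theorem TendstoInMeasure.prodMk {ι Ω E F : Type*} {m : MeasurableSpace Ω} {μ : Measure Ω}
    [PseudoMetricSpace E] [PseudoMetricSpace F] {l : Filter ι}
    {f : ι → Ω → E} {g : ι → Ω → F} {f' : Ω → E} {g' : Ω → F}
    (hf : TendstoInMeasure μ f l f') (hg : TendstoInMeasure μ g l g') :
    TendstoInMeasure μ (fun i ω ↦ (f i ω, g i ω)) l (fun ω ↦ (f' ω, g' ω)) := by
  rw [tendstoInMeasure_iff_dist] at hf hg ⊢
  intro ε hε
  refine tendsto_of_tendsto_of_tendsto_of_le_of_le tendsto_const_nhds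
    (by simpa using (hf ε hε).add (hg ε hε)) (fun _ ↦ zero_le)
    fun i ↦ (measure_mono fun ω hω ↦ ?_).trans (measure_union_le _ _)
  simpa [Prod.dist_eq] using hω

theorem tendstoInMeasure_const_of_tendsto {ι Ω E : Type*} {m : MeasurableSpace Ω}
    {μ : Measure Ω} [PseudoMetricSpace E] {l : Filter ι}
    {c : ι → E} {a : E} (hc : Tendsto c l (𝓝 a)) :
    TendstoInMeasure μ (fun i (_ : Ω) ↦ c i) l (fun _ ↦ a) := by
  refine tendstoInMeasure_iff_dist.2 fun ε hε ↦ tendsto_const_nhds.congr' ?_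
  filter_upwards [Metric.tendsto_nhds.1 hc ε hε] with i hi
  simp [not_le.2 hi]

theorem TendstoInMeasure.tendsto_measure_lt {ι Ω : Type*} {m : MeasurableSpace Ω}
    {μ : Measure Ω} {l : Filter ι} {f : ι → Ω → ℝ} {a b : ℝ}
    (hf : TendstoInMeasure μ f l (fun _ ↦ a)) (hb : b < a) :
    Tendsto (fun i ↦ μ {ω | f i ω < b}) l (𝓝 0) := by
  refine tendsto_of_tendsto_of_tendsto_of_le_of_le tendsto_const_nhds
    (tendstoInMeasure_iff_dist.1 hf (a - b) (sub_pos.2 hb)) (fun _ ↦ zero_le)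
    fun i ↦ measure_mono fun ω (hω : f i ω < b) ↦ ?_
  simp only [Set.mem_ofPred_eq, Real.dist_eq]
  rw [abs_sub_comm]
  exact (sub_le_sub_left hω.le a).trans (le_abs_self _)

end MeasureTheory

section ArLm

variable (Δ a b : ℝ)

-- `q = ((E, F), (d G, d), (Φ̂, Ψ̂))`; note `Δ_n G = Δ (d G)` and `Δ_n² G = Δ² d (d G)`.
noncomputable def arLmFloored (q : (ℝ × ℝ) × (ℝ × ℝ) × (ℝ × ℝ)) : ℝ × ℝ :=
  ((q.1.1 + 2 * Δ * q.2.1.2 * q.1.2 + Δ ^ 2 * q.2.1.2 * q.2.1.1) / √(max q.2.2.1 a),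
   (q.1.2 + Δ * q.2.1.1) / √(max q.2.2.2 b))

variable {Δ a b}

theorem continuous_arLmFloored (ha : 0 < a) (hb : 0 < b) : Continuous (arLmFloored Δ a b) := by
  refine .prodMk (.div (by fun_prop) (by fun_prop) fun q ↦ ?_)
    (.div (by fun_prop) (by fun_prop) fun q ↦ ?_)
  · exact (Real.sqrt_pos.2 (ha.trans_le (le_max_right _ _))).ne'
  · exact (Real.sqrt_pos.2 (hb.trans_le (le_max_right _ _))).ne'

theorem arLmFloored_of_le {e f g d p r : ℝ} (hp : a ≤ p) (hr : b ≤ r) :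
    arLmFloored Δ a b ((e, f), (d * g, d), (p, r)) =
      ((e + 2 * (Δ * d) * f + (Δ * d) ^ 2 * g) / √p, (f + (Δ * d) * g) / √r) := by
  simp only [arLmFloored, max_eq_left hp, max_eq_left hr]
  congr 2 <;> ring

theorem arLmFloored_limit {Φ Ψ : ℝ} (hΦ : 0 < Φ) (hΨ : 0 < Ψ) (ha : a ≤ Φ) (hb : b ≤ Ψ)
    (x y C : ℝ) :
    arLmFloored Δ a b ((√Φ * x, √Ψ * y), (C, 0), (Φ, Ψ)) = (x, Δ * C / √Ψ + y) := by
  have hsΦ := Real.sqrt_pos.2 hΦ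
  have hsΨ := Real.sqrt_pos.2 hΨ
  simp only [arLmFloored, max_eq_left ha, max_eq_left hb]
  refine Prod.ext ?_ ?_ <;> field_simp <;> ring

end ArLm

theorem stmt_2_general {Ω : Type*} [MeasureSpace Ω] [IsProbabilityMeasure (ℙ : Measure Ω)]
    (E F G Φhat Ψhat : ℕ → Ω → ℝ)
    (hmeas : ∀ n, Measurable (E n) ∧ Measurable (F n) ∧ Measurable (G n) ∧
      Measurable (Φhat n) ∧ Measurable (Ψhat n))
    (Φ₁ Ψ ρ Ctil Δtil : ℝ) (hΦ₁ : 0 < Φ₁) (hΨ : 0 < Ψ)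
    (d : ℕ → ℝ) (hd : Tendsto d atTop (nhds 0))
    (hweak : ∀ f : (ℝ × ℝ) →ᵇ ℝ,
      Tendsto (fun n => ∫ ω, f (E n ω, F n ω) ∂ℙ) atTop
        (nhds (∫ z : ℝ × ℝ,
          f (Real.sqrt Φ₁ * z.1,
             Real.sqrt Ψ * (ρ * z.1 + Real.sqrt (1 - ρ ^ 2) * z.2))
          ∂((gaussianReal 0 1).prod (gaussianReal 0 1)))))
    (hG : TendstoInMeasure ℙ (fun n ω => d n * G n ω) atTop (fun _ => Ctil))
    (hΦhat : TendstoInMeasure ℙ Φhat atTop (fun _ => Φ₁))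
    (hΨhat : TendstoInMeasure ℙ Ψhat atTop (fun _ => Ψ)) :
    ∀ f : (ℝ × ℝ) →ᵇ ℝ,
      Tendsto (fun n => ∫ ω,
          f ((E n ω + 2 * (Δtil * d n) * F n ω + (Δtil * d n) ^ 2 * G n ω)
                / Real.sqrt (Φhat n ω),
             (F n ω + (Δtil * d n) * G n ω) / Real.sqrt (Ψhat n ω)) ∂ℙ) atTop
        (nhds (∫ z : ℝ × ℝ,
          f (z.1, Δtil * Ctil / Real.sqrt Ψ + ρ * z.1 + Real.sqrt (1 - ρ ^ 2) * z.2)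
          ∂((gaussianReal 0 1).prod (gaussianReal 0 1)))) := by
  have hEF : TendstoInDistribution (fun n ω ↦ (E n ω, F n ω)) atTop
      (fun z ↦ (√Φ₁ * z.1, √Ψ * (ρ * z.1 + √(1 - ρ ^ 2) * z.2))) (fun _ ↦ ℙ)
      ((gaussianReal 0 1).prod (gaussianReal 0 1)) :=
    (tendstoInDistribution_iff_tendsto_integral
      (fun n ↦ ((hmeas n).1.prodMk (hmeas n).2.1).aemeasurable) (by fun_prop)).2 hweak
  have hnuisance : TendstoInMeasure ℙ (fun n ω ↦ ((d n * G n ω, d n), (Φhat n ω, Ψhat n ω)))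
      atTop (fun _ ↦ ((Ctil, 0), (Φ₁, Ψ))) :=
    (hG.prodMk (tendstoInMeasure_const_of_tendsto hd)).prodMk (hΦhat.prodMk hΨhat)
  have hfloored := hEF.continuous_comp_prodMk_of_tendstoInMeasure_const
    (continuous_arLmFloored (Δ := Δtil) (half_pos hΦ₁) (half_pos hΨ)) hnuisance
    (fun n ↦ by obtain ⟨-, -, hGm, hΦm, hΨm⟩ := hmeas n; fun_prop)
  have hstat := hfloored.congr_of_tendsto_measure_ne
    (Y := fun n ω ↦ ((E n ω + 2 * (Δtil * d n) * F n ω + (Δtil * d n) ^ 2 * G n ω) / √(Φhat n ω),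
      (F n ω + (Δtil * d n) * G n ω) / √(Ψhat n ω)))
    (fun n ↦ by obtain ⟨hEm, hFm, hGm, hΦm, hΨm⟩ := hmeas n; fun_prop) <| by
    have hsmall := (hΦhat.tendsto_measure_lt (half_lt_self hΦ₁)).add
      (hΨhat.tendsto_measure_lt (half_lt_self hΨ))
    rw [add_zero] at hsmall
    refine tendsto_of_tendsto_of_tendsto_of_le_of_le tendsto_const_nhds hsmall (fun _ ↦ zero_le)
      fun n ↦ (measure_mono fun ω (hω : _ ≠ _) ↦ ?_).trans (measure_union_le _ _)
    by_contra hfloor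
    simp only [Set.mem_union, Set.mem_ofPred_eq, not_or, not_lt] at hfloor
    exact hω (arLmFloored_of_le hfloor.1 hfloor.2).symm
  intro f
  convert (tendstoInDistribution_iff_tendsto_integral hstat.forall_aemeasurable
    hstat.aemeasurable_limit).1 hstat f using 4 with z
  rw [arLmFloored_limit hΦ₁ hΨ (half_le_self hΦ₁.le) (half_le_self hΨ.le), add_assoc]

/-- Lemma 1 of the paper, strong identification with local alternatives:
if the laws of `(E_n, F_n)` converge weakly to a centered bivariate normal with variances
`Φ₁, Ψ` and correlation `ρ`, `d_n·G_n → C̃`, `Φ̂_n → Φ₁`, `Ψ̂_n → Ψ` in probability, and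
`Δ_n = Δ̃·d_n` with `d_n → 0`, then the laws of `(AR_n, LM_n)` converge weakly to the
bivariate normal with mean `(0, Δ̃C̃/√Ψ)`, unit variances and correlation `ρ`. -/
theorem stmt_2 {Ω : Type*} [MeasureSpace Ω] [IsProbabilityMeasure (ℙ : Measure Ω)]
    (E F G Φhat Ψhat : ℕ → Ω → ℝ)
    (hmeas : ∀ n, Measurable (E n) ∧ Measurable (F n) ∧ Measurable (G n) ∧
      Measurable (Φhat n) ∧ Measurable (Ψhat n))
    (Φ₁ Ψ ρ Ctil Δtil : ℝ) (hΦ₁ : 0 < Φ₁) (hΨ : 0 < Ψ) (hρ : ρ ∈ Set.Ioo (-1 : ℝ) 1)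
    (d : ℕ → ℝ) (hd : Tendsto d atTop (nhds 0))
    (hweak : ∀ f : (ℝ × ℝ) →ᵇ ℝ,
      Tendsto (fun n => ∫ ω, f (E n ω, F n ω) ∂ℙ) atTop
        (nhds (∫ z : ℝ × ℝ,
          f (Real.sqrt Φ₁ * z.1,
             Real.sqrt Ψ * (ρ * z.1 + Real.sqrt (1 - ρ ^ 2) * z.2))
          ∂((gaussianReal 0 1).prod (gaussianReal 0 1)))))
    (hG : TendstoInMeasure ℙ (fun n ω => d n * G n ω) atTop (fun _ => Ctil))
    (hΦhat : TendstoInMeasure ℙ Φhat atTop (fun _ => Φ₁))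
    (hΨhat : TendstoInMeasure ℙ Ψhat atTop (fun _ => Ψ)) :
    ∀ f : (ℝ × ℝ) →ᵇ ℝ,
      Tendsto (fun n => ∫ ω,
          f ((E n ω + 2 * (Δtil * d n) * F n ω + (Δtil * d n) ^ 2 * G n ω)
                / Real.sqrt (Φhat n ω),
             (F n ω + (Δtil * d n) * G n ω) / Real.sqrt (Ψhat n ω)) ∂ℙ) atTop
        (nhds (∫ z : ℝ × ℝ,
          f (z.1, Δtil * Ctil / Real.sqrt Ψ + ρ * z.1 + Real.sqrt (1 - ρ ^ 2) * z.2)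
          ∂((gaussianReal 0 1).prod (gaussianReal 0 1)))) :=
  stmt_2_general E F G Φhat Ψhat hmeas Φ₁ Ψ ρ Ctil Δtil hΦ₁ hΨ d hd hweak hG hΦhat hΨhat
end

section
/- Let Φ₁, Φ₁₂, Φ₁₃, Ψ, τ, Υ, C̃ be real numbers with Υ > 0 and ΥΨ − τ² > 0. For Δ ∈ ℝ define Φ₁(Δ) := Δ⁴Υ + 4Δ³τ + Δ²(4Ψ + 2Φ₁₃) + 4ΔΦ₁₂ + Φ₁, Φ₁₂(Δ) := Δ³Υ + 3Δ²τ + Δ(2Ψ + Φ₁₃) + Φ₁₂, Ψ(Δ) := Δ²Υ + 2Δτ + Ψ, and the mean functions m₁(Δ) := Δ²C̃/√(Φ₁(Δ)) and m₂(Δ) := C̃·(Δ·Φ₁(Δ) − Δ²·Φ₁₂(Δ))/√(Φ₁(Δ)·(Φ₁(Δ)Ψ(Δ) − Φ₁₂(Δ)²)). Then, as Δ → +∞: m₁(Δ) → C̃/√Υ and m₂(Δ) → C̃·τ/√(Υ·(ΥΨ − τ²)), and the latter equals (C̃/√Υ)·ρ₂₃/√(1−ρ₂₃²) with ρ₂₃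 := τ/√(ΨΥ) when Ψ > 0. -/
/-!
Each of `Φ₁(Δ)`, `Δ Φ₁(Δ) - Δ² Φ₁₂(Δ)` and `Φ₁(Δ) Ψ(Δ) - Φ₁₂(Δ)²` is a polynomial of degree at
most four in `Δ` (the top coefficients of the last two cancel), with `Δ⁴`-coefficients `Υ`, `τ` and
`ΥΨ - τ²`. Dividing the numerator of `mᵢ` by `Δᵏ` and the radicand by `Δ²ᵏ` (`k = 2, 4`) turns
`mᵢ` into a continuous function of ratios converging to these coefficients.
-/

open Filter Topology

theorem tendsto_sum_mul_pow_div_pow {n : ℕ} (c : Fin (n + 1) → ℝ) :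
    Tendsto (fun x : ℝ => (∑ i, c i * x ^ (i : ℕ)) / x ^ n) atTop (𝓝 (c (Fin.last n))) := by
  have hlow : ∀ i : Fin n,
      Tendsto (fun x : ℝ => c i.castSucc / x ^ (n - i)) atTop (𝓝 0) := fun i =>
    tendsto_const_nhds.div_atTop (tendsto_pow_atTop (by omega))
  have hsum := (tendsto_finsetSum Finset.univ fun i _ => hlow i).add_const (c (Fin.last n))
  rw [Finset.sum_const_zero, zero_add] at hsum
  refine hsum.congr' ?_
  filter_upwards [eventually_gt_atTop 0] with x hx
  rw [Fin.sum_univ_castSucc, add_div, Finset.sum_div, Fin.val_last,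
    mul_div_cancel_right₀ _ (pow_ne_zero n hx.ne')]
  congr 1
  refine Finset.sum_congr rfl fun i _ => ?_
  rw [Fin.val_castSucc, pow_sub₀ x hx.ne' i.is_lt.le]
  field_simp

theorem tendsto_quartic_div_pow_four (a b c d e : ℝ) :
    Tendsto (fun x : ℝ => (a + b * x + c * x ^ 2 + d * x ^ 3 + e * x ^ 4) / x ^ 4) atTop (𝓝 e) := by
  simpa [Fin.sum_univ_succ, add_assoc] using tendsto_sum_mul_pow_div_pow ![a, b, c, d, e]

theorem tendsto_div_sqrt_of_tendsto_div_pow {f g : ℝ → ℝ} {a b : ℝ} (k : ℕ)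
    (hf : Tendsto (fun x => f x / x ^ k) atTop (𝓝 a))
    (hg : Tendsto (fun x => g x / (x ^ k) ^ 2) atTop (𝓝 b)) (hb : 0 < b) :
    Tendsto (fun x => f x / √(g x)) atTop (𝓝 (a / √b)) := by
  refine (hf.div hg.sqrt (Real.sqrt_ne_zero'.2 hb)).congr' ?_
  filter_upwards [eventually_gt_atTop 0] with x hx
  have hxk : 0 < x ^ k := pow_pos hx k
  rw [Pi.div_apply, Real.sqrt_div' _ (by positivity), Real.sqrt_sq hxk.le,
    div_div_div_cancel_right₀ hxk.ne']

theorem mul_div_sqrt_eq_corr {Ψ τ Υ : ℝ} (C : ℝ) (hΥ : 0 < Υ) (hΨ : 0 < Ψ)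
    (hdet : 0 < Υ * Ψ - τ ^ 2) :
    C * τ / √(Υ * (Υ * Ψ - τ ^ 2))
      = C / √Υ * (τ / √(Ψ * Υ) / √(1 - (τ / √(Ψ * Υ)) ^ 2)) := by
  have hΨΥ : 0 < Ψ * Υ := mul_pos hΨ hΥ
  have hρ : 1 - (τ / √(Ψ * Υ)) ^ 2 = (Υ * Ψ - τ ^ 2) / (Ψ * Υ) := by
    rw [div_pow, Real.sq_sqrt hΨΥ.le]
    field_simp
  rw [hρ, Real.sqrt_div hdet.le, Real.sqrt_mul hΥ.le]
  have hsqrt_det : √(Υ * Ψ - τ ^ 2) ≠ 0 := Real.sqrt_ne_zero'.2 hdet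
  have hsqrt_ΨΥ : √(Ψ * Υ) ≠ 0 := Real.sqrt_ne_zero'.2 hΨΥ
  field_simp

/-- Lemma 4 of the paper, second part: limits of the noncentrality means
`m₁(Δ)` and `m₂(Δ)` as `Δ → +∞`, and the correlation form of the second limit. -/
theorem stmt_10 (Φ₁ Φ₁₂ Φ₁₃ Ψ τ Υ Ctil : ℝ) (hΥ : 0 < Υ)
    (hpos : 0 < Υ * Ψ - τ ^ 2)
    (Φ₁f Φ₁₂f Ψf m₁ m₂ : ℝ → ℝ)
    (hΦ₁f : Φ₁f = fun Δ => Δ ^ 4 * Υ + 4 * Δ ^ 3 * τ + Δ ^ 2 * (4 * Ψ + 2 * Φ₁₃)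
      + 4 * Δ * Φ₁₂ + Φ₁)
    (hΦ₁₂f : Φ₁₂f = fun Δ => Δ ^ 3 * Υ + 3 * Δ ^ 2 * τ + Δ * (2 * Ψ + Φ₁₃) + Φ₁₂)
    (hΨf : Ψf = fun Δ => Δ ^ 2 * Υ + 2 * Δ * τ + Ψ)
    (hm₁ : m₁ = fun Δ => Δ ^ 2 * Ctil / Real.sqrt (Φ₁f Δ))
    (hm₂ : m₂ = fun Δ => Ctil * (Δ * Φ₁f Δ - Δ ^ 2 * Φ₁₂f Δ) /
      Real.sqrt (Φ₁f Δ * (Φ₁f Δ * Ψf Δ - (Φ₁₂f Δ) ^ 2))) :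
    Tendsto m₁ atTop (nhds (Ctil / Real.sqrt Υ)) ∧
      Tendsto m₂ atTop (nhds (Ctil * τ / Real.sqrt (Υ * (Υ * Ψ - τ ^ 2)))) ∧
      (0 < Ψ → Ctil * τ / Real.sqrt (Υ * (Υ * Ψ - τ ^ 2))
        = (Ctil / Real.sqrt Υ) * ((τ / Real.sqrt (Ψ * Υ)) /
            Real.sqrt (1 - (τ / Real.sqrt (Ψ * Υ)) ^ 2))) := by
  subst hΦ₁f hΦ₁₂f hΨf hm₁ hm₂
  have hΦ₁ := tendsto_quartic_div_pow_four Φ₁ (4 * Φ₁₂) (4 * Ψ + 2 * Φ₁₃) (4 * τ) Υ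
  have hNum := tendsto_quartic_div_pow_four 0 Φ₁ (3 * Φ₁₂) (2 * Ψ + Φ₁₃) τ
  have hDet := tendsto_quartic_div_pow_four (Ψ * Φ₁ - Φ₁₂ ^ 2) (2 * τ * Φ₁ - 2 * Φ₁₃ * Φ₁₂)
    (Υ * Φ₁ + 2 * τ * Φ₁₂ - 2 * Ψ * Φ₁₃ - Φ₁₃ ^ 2) (2 * Υ * Φ₁₂ - 2 * τ * Φ₁₃) (Υ * Ψ - τ ^ 2)
  refine ⟨?_, ?_, fun hΨ => mul_div_sqrt_eq_corr Ctil hΥ hΨ hpos⟩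
  · refine tendsto_div_sqrt_of_tendsto_div_pow 2 ?_ (hΦ₁.congr fun Δ => by ring) hΥ
    refine tendsto_const_nhds.congr' ?_
    filter_upwards [eventually_ne_atTop 0] with Δ hΔ
    field_simp
  · refine tendsto_div_sqrt_of_tendsto_div_pow 4 ((hNum.const_mul Ctil).congr fun Δ => by ring)
      ((hΦ₁.mul hDet).congr fun Δ => by ring) (mul_pos hΥ hpos)
end

section
/- Let α ∈ (0,1) and let ν₁ ≥ ν₂ ≥ 0 with ν₁ > 0. For θ = (θ₁, θ₂) ∈ ℝ², let μ_θ be the product on ℝ² of the normal distribution with mean θ₁ and variance 1 and the normal distribution with mean θ₂ and variance 1. Let c > 0 satisfy μ_{(0,0)}{(x,y) : ν₁x² + ν₂y² ≥ c} = α, and let ψ(x,y) := 1{ν₁x² + ν₂y² ≥ c}. Let Φ_α be the class of measurable functions φ : ℝ² → [0,1] that are even in each coordinate (φ(x,y) = φ(−x,y) = φ(x,−y) for all (x,y)) and satisfy ∫φ dμ_{(0,0)} ≤ α. Then ψ is admissible within Φ_α: if φ ∈ Φ_α satisfies ∫φ dμ_θ ≥ ∫ψ dμ_θ for every θ ∈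 ℝ², then ∫φ dμ_θ = ∫ψ dμ_θ for every θ ∈ ℝ². -/
/-!
Average the power of a test over the prior `θ ~ N(0, v₁ - 1) ⊗ N(0, v₂ - 1)`: since Gaussian
noise convolves with a Gaussian prior, the averaged alternative is `Q = N(0, v₁) ⊗ N(0, v₂)`.
For `1 - v⁻¹` proportional to `ν`, the likelihood ratio `dQ/dμ₀` is an increasing function of
`ν₁x² + ν₂y²`, so `ψ` is the Neyman–Pearson test of `μ₀` against `Q`. A test of size at most
`α` that dominates `ψ` at every `θ` also dominates it against `Q`, and the uniqueness part of the
Neyman–Pearson lemma (the level set `ν₁x² + ν₂y² = c` is null) forces `φ = ψ` `μ₀`-a.e.; as all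
`μ_θ` are mutually absolutely continuous, `φ` and `ψ` have the same power everywhere.
-/

open MeasureTheory ProbabilityTheory Real
open scoped NNReal ENNReal

namespace MeasureTheory.Measure

variable {G H : Type*} [AddMonoid G] [AddMonoid H] [MeasurableSpace G] [MeasurableSpace H]
  [MeasurableAdd₂ G] [MeasurableAdd₂ H] [MeasurableAdd₂ (G × H)]

lemma conv_apply (μ ν : Measure G) [SFinite ν] {s : Set G} (hs : MeasurableSet s) :
    (μ ∗ ν) s = ∫⁻ x, ν ((x + ·) ⁻¹' s) ∂μ := by
  rw [conv, map_apply measurable_add hs, prod_apply (measurable_add hs)]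
  rfl

lemma prod_conv_prod (μ₁ ν₁ : Measure G) (μ₂ ν₂ : Measure H) [IsFiniteMeasure μ₁]
    [IsFiniteMeasure ν₁] [IsFiniteMeasure μ₂] [IsFiniteMeasure ν₂] :
    (μ₁.prod μ₂) ∗ (ν₁.prod ν₂) = (μ₁ ∗ ν₁).prod (μ₂ ∗ ν₂) := by
  refine (prod_eq fun s t hs ht => ?_).symm
  have hsec : ∀ x : G × H, (x + ·) ⁻¹' (s ×ˢ t) = ((x.1 + ·) ⁻¹' s) ×ˢ ((x.2 + ·) ⁻¹' t) :=
    fun _ => rfl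
  rw [conv_apply _ _ (hs.prod ht), conv_apply _ _ hs, conv_apply _ _ ht]
  simp only [hsec, prod_prod]
  exact lintegral_prod_mul (measurable_measure_prodMk_left (measurable_add hs)).aemeasurable
    (measurable_measure_prodMk_left (measurable_add ht)).aemeasurable

lemma ae_prod_quadratic_ne (μ ν : Measure ℝ) [NullSingletonClass μ] [SFinite μ] [SFinite ν]
    {a : ℝ} (ha : a ≠ 0) (b c : ℝ) : ∀ᵐ p ∂μ.prod ν, a * p.1 ^ 2 + b * p.2 ^ 2 ≠ c := by
  have hsec : ∀ y : ℝ, μ ((·, y) ⁻¹' {p : ℝ × ℝ | a * p.1 ^ 2 + b * p.2 ^ 2 = c}) = 0 := by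
    intro y
    set k := (c - b * y ^ 2) / a
    refine (Set.Finite.subset (s := {√k, -√k}) (by simp) fun x hx => ?_).measure_zero _
    have hxk : x ^ 2 = k := by
      simp only [Set.mem_preimage, Set.mem_ofPred_eq] at hx
      rw [eq_div_iff ha]
      linarith
    exact eq_or_eq_neg_of_sq_eq_sq _ _ (by rw [sq_sqrt (hxk ▸ sq_nonneg x), hxk])
  refine (measure_eq_zero_iff_ae_notMem (s := {p : ℝ × ℝ | a * p.1 ^ 2 + b * p.2 ^ 2 = c})).1 ?_
  rw [prod_apply_symm (measurableSet_eq_fun (by fun_prop) measurable_const)]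
  simp only [hsec, lintegral_zero]

end MeasureTheory.Measure

lemma neyman_pearson_ae_eq_zero {X : Type*} [MeasurableSpace X] {P : Measure X} {L f : X → ℝ}
    {k : ℝ} (hL : Measurable L) (hL0 : ∀ x, 0 ≤ L x) (hk : 0 ≤ k) (hf : Integrable f P)
    (hfQ : Integrable f (P.withDensity fun x => ENNReal.ofReal (L x)))
    (hsign : ∀ x, 0 ≤ (k - L x) * f x) (hLk : ∀ᵐ x ∂P, L x ≠ k)
    (hnull : ∫ x, f x ∂P ≤ 0) (halt : 0 ≤ ∫ x, f x ∂(P.withDensity fun x => ENNReal.ofReal (L x))) :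
    f =ᵐ[P] 0 := by
  have hdens : Measurable fun x => ENNReal.ofReal (L x) := hL.ennreal_ofReal
  have hfinite : ∀ᵐ x ∂P, ENNReal.ofReal (L x) < ∞ := ae_of_all _ fun _ => ENNReal.ofReal_lt_top
  simp only [integrable_withDensity_iff_integrable_smul' hdens hfinite,
    integral_withDensity_eq_integral_toReal_smul hdens hfinite, ENNReal.toReal_ofReal (hL0 _),
    smul_eq_mul] at hfQ halt
  have hint : Integrable (fun x => (k - L x) * f x) P := by
    simp_rw [sub_mul]
    exact (hf.const_mul k).sub hfQ
  have hzero : ∫ x, (k - L x) * f x ∂P = 0 := by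
    refine le_antisymm ?_ (integral_nonneg hsign)
    rw [integral_congr_ae (ae_of_all _ fun x => sub_mul k (L x) (f x)),
      integral_sub (hf.const_mul k) hfQ, integral_const_mul]
    nlinarith
  filter_upwards [(integral_eq_zero_iff_of_nonneg hsign hint).1 hzero, hLk] with x hx hxk
  exact (mul_eq_zero.1 hx).resolve_left (sub_ne_zero.2 hxk.symm)

lemma mul_sub_ite_nonneg {g : ℝ → ℝ} (hg : Monotone g) {c t y : ℝ} (hy : y ∈ Set.Icc 0 1) :
    0 ≤ (g c - g t) * (y - if c ≤ t then 1 else 0) := by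
  split_ifs with h
  · exact mul_nonneg_of_nonpos_of_nonpos (sub_nonpos.2 (hg h)) (by linarith [hy.2])
  · exact mul_nonneg (sub_nonneg.2 (hg (not_le.1 h).le)) (by linarith [hy.1])

namespace ProbabilityTheory

lemma prod_gaussianReal_absolutelyContinuous (m₁ m₂ m₁' m₂' : ℝ) {v₁ v₂ v₁' v₂' : ℝ≥0}
    (hv₁ : v₁ ≠ 0) (hv₂ : v₂ ≠ 0) (hv₁' : v₁' ≠ 0) (hv₂' : v₂' ≠ 0) :
    (gaussianReal m₁ v₁).prod (gaussianReal m₂ v₂) ≪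
      (gaussianReal m₁' v₁').prod (gaussianReal m₂' v₂') :=
  ((gaussianReal_absolutelyContinuous m₁ hv₁).trans
      (gaussianReal_absolutelyContinuous' m₁' hv₁')).prod
    ((gaussianReal_absolutelyContinuous m₂ hv₂).trans
      (gaussianReal_absolutelyContinuous' m₂' hv₂'))

lemma gaussianPDFReal_zero_eq_mul {v : ℝ≥0} (hv : v ≠ 0) (x : ℝ) :
    gaussianPDFReal 0 v x =
      (√v)⁻¹ * exp ((1 - (v : ℝ)⁻¹) * x ^ 2 / 2) * gaussianPDFReal 0 1 x := by
  have hv' : (0 : ℝ) < v := by positivity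
  simp only [gaussianPDFReal, sub_zero, NNReal.coe_one, mul_one]
  rw [mul_mul_mul_comm, ← exp_add, show 2 * π * (v : ℝ) = v * (2 * π) by ring,
    sqrt_mul hv'.le, mul_inv]
  congr 2
  field_simp
  ring

lemma gaussianReal_zero_eq_withDensity {v : ℝ≥0} (hv : v ≠ 0) :
    gaussianReal 0 v = (gaussianReal 0 1).withDensity
      fun x => ENNReal.ofReal ((√v)⁻¹ * exp ((1 - (v : ℝ)⁻¹) * x ^ 2 / 2)) := by
  rw [gaussianReal_of_var_ne_zero _ hv, gaussianReal_of_var_ne_zero _ one_ne_zero,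
    ← withDensity_mul _ (measurable_gaussianPDF 0 1) (by fun_prop)]
  congr 1
  funext x
  rw [Pi.mul_apply, gaussianPDF, gaussianPDF, ← ENNReal.ofReal_mul (gaussianPDFReal_nonneg _ _ _),
    mul_comm, gaussianPDFReal_zero_eq_mul hv]

lemma exists_one_le_one_sub_inv_eq {a : ℝ} (ha₀ : 0 ≤ a) (ha₁ : a < 1) :
    ∃ v : ℝ≥0, 1 ≤ v ∧ 1 - (v : ℝ)⁻¹ = a := by
  have hpos : 0 < 1 - a := by linarith
  refine ⟨(1 - a)⁻¹.toNNReal, ?_, ?_⟩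
  · rw [← NNReal.coe_le_coe, Real.coe_toNNReal _ (inv_nonneg.2 hpos.le), NNReal.coe_one]
    exact (one_le_inv₀ hpos).2 (by linarith)
  · rw [Real.coe_toNNReal _ (inv_nonneg.2 hpos.le), inv_inv]
    ring

lemma exists_prod_gaussianReal_eq_withDensity_exp {ν₁ ν₂ : ℝ} (hν₁ : 0 ≤ ν₁) (hν₂ : 0 ≤ ν₂) :
    ∃ v₁ v₂ : ℝ≥0, 1 ≤ v₁ ∧ 1 ≤ v₂ ∧ ∃ C s : ℝ, 0 < C ∧ 0 < s ∧
      (gaussianReal 0 v₁).prod (gaussianReal 0 v₂) =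
        ((gaussianReal 0 1).prod (gaussianReal 0 1)).withDensity
          fun p => ENNReal.ofReal (C * exp (s * (ν₁ * p.1 ^ 2 + ν₂ * p.2 ^ 2))) := by
  have hden : 0 < ν₁ + ν₂ + 1 := by linarith
  have hlt : ∀ ν, ν ≤ ν₁ + ν₂ → ν / (ν₁ + ν₂ + 1) < 1 :=
    fun ν hν => (div_lt_one hden).2 (by linarith)
  obtain ⟨v₁, hv₁, ha₁⟩ := exists_one_le_one_sub_inv_eq (by positivity) (hlt ν₁ (by linarith))
  obtain ⟨v₂, hv₂, ha₂⟩ := exists_one_le_one_sub_inv_eq (by positivity) (hlt ν₂ (by linarith))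
  have hv₁0 : v₁ ≠ 0 := (zero_lt_one.trans_le hv₁).ne'
  have hv₂0 : v₂ ≠ 0 := (zero_lt_one.trans_le hv₂).ne'
  refine ⟨v₁, v₂, hv₁, hv₂, (√v₁)⁻¹ * (√v₂)⁻¹, (2 * (ν₁ + ν₂ + 1))⁻¹, by positivity,
    by positivity, ?_⟩
  rw [gaussianReal_zero_eq_withDensity hv₁0, gaussianReal_zero_eq_withDensity hv₂0,
    prod_withDensity (by fun_prop) (by fun_prop)]
  congr 1
  funext p
  rw [← ENNReal.ofReal_mul (by positivity), mul_mul_mul_comm, ← exp_add, ha₁, ha₂]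
  congr 3
  field_simp

lemma prod_gaussianReal_map_const_add (m₁ m₂ : ℝ) (v₁ v₂ : ℝ≥0) (θ : ℝ × ℝ) :
    ((gaussianReal m₁ v₁).prod (gaussianReal m₂ v₂)).map (θ + ·) =
      (gaussianReal (m₁ + θ.1) v₁).prod (gaussianReal (m₂ + θ.2) v₂) := by
  rw [← gaussianReal_map_const_add, ← gaussianReal_map_const_add,
    Measure.map_prod_map _ _ (by fun_prop) (by fun_prop)]
  rfl

lemma integral_nonneg_of_forall_integral_prod_gaussianReal_nonneg {v₁ v₂ : ℝ≥0} (hv₁ : 1 ≤ v₁)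
    (hv₂ : 1 ≤ v₂) {f : ℝ × ℝ → ℝ}
    (hf : Integrable f ((gaussianReal 0 v₁).prod (gaussianReal 0 v₂)))
    (hθ : ∀ θ : ℝ × ℝ, 0 ≤ ∫ p, f p ∂((gaussianReal θ.1 1).prod (gaussianReal θ.2 1))) :
    0 ≤ ∫ p, f p ∂((gaussianReal 0 v₁).prod (gaussianReal 0 v₂)) := by
  have hmix : (gaussianReal 0 v₁).prod (gaussianReal 0 v₂) =
      ((gaussianReal 0 (v₁ - 1)).prod (gaussianReal 0 (v₂ - 1))) ∗
        ((gaussianReal 0 1).prod (gaussianReal 0 1)) := by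
    rw [Measure.prod_conv_prod, gaussianReal_conv_gaussianReal, gaussianReal_conv_gaussianReal,
      tsub_add_cancel_of_le hv₁, tsub_add_cancel_of_le hv₂, add_zero]
  rw [hmix] at hf ⊢
  rw [integral_conv hf]
  refine integral_nonneg fun θ => ?_
  have hshift : (gaussianReal θ.1 1).prod (gaussianReal θ.2 1) =
      ((gaussianReal 0 1).prod (gaussianReal 0 1)).map (MeasurableEquiv.addLeft θ) := by
    rw [MeasurableEquiv.coe_addLeft, prod_gaussianReal_map_const_add, zero_add, zero_add]
  have hθ' := hθ θ
  rwa [hshift, integral_map_equiv] at hθ'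

end ProbabilityTheory

theorem stmt_11_general (α : ℝ) (hα : α ∈ Set.Ioo (0 : ℝ) 1)
    (ν₁ ν₂ : ℝ) (h2 : 0 ≤ ν₂) (h1 : 0 < ν₁)
    (μ : ℝ × ℝ → Measure (ℝ × ℝ))
    (hμ : ∀ θ : ℝ × ℝ, μ θ = (gaussianReal θ.1 1).prod (gaussianReal θ.2 1))
    (c : ℝ)
    (hsize : μ (0, 0) {p : ℝ × ℝ | c ≤ ν₁ * p.1 ^ 2 + ν₂ * p.2 ^ 2} = ENNReal.ofReal α)
    (ψ : ℝ × ℝ → ℝ)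
    (hψ : ψ = fun p => if c ≤ ν₁ * p.1 ^ 2 + ν₂ * p.2 ^ 2 then (1 : ℝ) else 0)
    (φ : ℝ × ℝ → ℝ) (hφm : Measurable φ) (hφ01 : ∀ p, φ p ∈ Set.Icc (0 : ℝ) 1)
    (hφlevel : (∫ p, φ p ∂(μ (0, 0))) ≤ α)
    (hdom : ∀ θ : ℝ × ℝ, (∫ p, ψ p ∂(μ θ)) ≤ ∫ p, φ p ∂(μ θ)) :
    ∀ θ : ℝ × ℝ, (∫ p, φ p ∂(μ θ)) = ∫ p, ψ p ∂(μ θ) := by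
  obtain rfl : μ = fun θ => (gaussianReal θ.1 1).prod (gaussianReal θ.2 1) := funext hμ
  dsimp only at hsize hφlevel hdom ⊢
  have hrej : MeasurableSet {p : ℝ × ℝ | c ≤ ν₁ * p.1 ^ 2 + ν₂ * p.2 ^ 2} :=
    measurableSet_le measurable_const (by fun_prop)
  have hψ_ind : ψ = {p : ℝ × ℝ | c ≤ ν₁ * p.1 ^ 2 + ν₂ * p.2 ^ 2}.indicator 1 := by
    rw [hψ]; rfl
  have hint : ∀ (ρ : Measure (ℝ × ℝ)) [IsFiniteMeasure ρ], Integrable φ ρ ∧ Integrable ψ ρ :=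
    fun ρ _ => ⟨.of_bound hφm.aestronglyMeasurable 1 (ae_of_all _ fun p => by
        simpa [abs_le] using ⟨(hφ01 p).1.trans' (by norm_num), (hφ01 p).2⟩),
      hψ_ind ▸ (integrable_const 1).indicator hrej⟩
  have hint_sub : ∀ (ρ : Measure (ℝ × ℝ)) [IsFiniteMeasure ρ],
      Integrable (fun p => φ p - ψ p) ρ := fun ρ _ => (hint ρ).1.sub (hint ρ).2
  obtain ⟨v₁, v₂, hv₁, hv₂, C, s, hC, hs, hQ⟩ :=
    exists_prod_gaussianReal_eq_withDensity_exp h1.le h2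
  have hnull : ∫ p, φ p - ψ p ∂((gaussianReal 0 1).prod (gaussianReal 0 1)) ≤ 0 := by
    rw [integral_sub (hint _).1 (hint _).2, hψ_ind, integral_indicator_one hrej, measureReal_def,
      hsize, ENNReal.toReal_ofReal hα.1.le]
    linarith
  have halt : 0 ≤ ∫ p, φ p - ψ p ∂((gaussianReal 0 v₁).prod (gaussianReal 0 v₂)) :=
    integral_nonneg_of_forall_integral_prod_gaussianReal_nonneg hv₁ hv₂ (hint_sub _) fun θ => by
      rw [integral_sub (hint _).1 (hint _).2]
      linarith [hdom θ]
  rw [hQ] at halt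
  have hg : StrictMono fun u => C * exp (s * u) :=
    (exp_strictMono.comp (strictMono_mul_left_of_pos hs)).const_mul hC
  have := nullSingletonClass_gaussianReal (μ := 0) one_ne_zero
  have hae : ∀ᵐ p ∂(gaussianReal 0 1).prod (gaussianReal 0 1), φ p - ψ p = 0 := by
    refine neyman_pearson_ae_eq_zero (k := C * exp (s * c)) (by fun_prop) (fun p => by positivity)
      (by positivity) (hint_sub _) (hQ ▸ hint_sub _) (fun p => ?_) ?_ hnull halt
    · rw [hψ]
      exact mul_sub_ite_nonneg hg.monotone (hφ01 p)
    · filter_upwards [Measure.ae_prod_quadratic_ne _ _ h1.ne' ν₂ c] with p hp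
      exact hg.injective.ne hp
  refine fun θ => integral_congr_ae ?_
  filter_upwards [(prod_gaussianReal_absolutelyContinuous θ.1 θ.2 0 0 one_ne_zero one_ne_zero
    one_ne_zero one_ne_zero).ae_le hae] with p hp
  exact sub_eq_zero.1 hp

/-- Theorem 1(i) of the paper, admissibility: the test
`ψ = 1{ν₁x² + ν₂y² ≥ c}` is admissible within the class of size-`α` tests that are even
in each coordinate, for the Gaussian location model on `ℝ²` with independent
unit-variance coordinates. -/
theorem stmt_11 (α : ℝ) (hα : α ∈ Set.Ioo (0 : ℝ) 1)
    (ν₁ ν₂ : ℝ) (h21 : ν₂ ≤ ν₁) (h2 : 0 ≤ ν₂) (h1 : 0 < ν₁)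
    (μ : ℝ × ℝ → Measure (ℝ × ℝ))
    (hμ : ∀ θ : ℝ × ℝ, μ θ = (gaussianReal θ.1 1).prod (gaussianReal θ.2 1))
    (c : ℝ) (hc : 0 < c)
    (hsize : μ (0, 0) {p : ℝ × ℝ | c ≤ ν₁ * p.1 ^ 2 + ν₂ * p.2 ^ 2} = ENNReal.ofReal α)
    (ψ : ℝ × ℝ → ℝ)
    (hψ : ψ = fun p => if c ≤ ν₁ * p.1 ^ 2 + ν₂ * p.2 ^ 2 then (1 : ℝ) else 0)
    (φ : ℝ × ℝ → ℝ) (hφm : Measurable φ) (hφ01 : ∀ p, φ p ∈ Set.Icc (0 : ℝ) 1)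
    (hφeven1 : ∀ x y : ℝ, φ (x, y) = φ (-x, y))
    (hφeven2 : ∀ x y : ℝ, φ (x, y) = φ (x, -y))
    (hφlevel : (∫ p, φ p ∂(μ (0, 0))) ≤ α)
    (hdom : ∀ θ : ℝ × ℝ, (∫ p, ψ p ∂(μ θ)) ≤ ∫ p, φ p ∂(μ θ)) :
    ∀ θ : ℝ × ℝ, (∫ p, φ p ∂(μ θ)) = ∫ p, ψ p ∂(μ θ) :=
  stmt_11_general α hα ν₁ ν₂ h2 h1 μ hμ c hsize ψ hψ φ hφm hφ01 hφlevel hdom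
end

section
/- Let α ∈ (0,1) and ν₁ ≥ ν₂ ≥ 0 with ν₁ > 0. For θ = (θ₁, θ₂) ∈ ℝ², let μ_θ be the product on ℝ² of the normal distribution with mean θ₁ and variance 1 and the normal distribution with mean θ₂ and variance 1. Let c > 0 satisfy μ_{(0,0)}{(x,y) : ν₁x² + ν₂y² ≥ c} = α, and let ψ(x,y) := 1{ν₁x² + ν₂y² ≥ c}. Let Φ_α be the class of measurable functions φ : ℝ² → [0,1] that are even in each coordinate (φ(x,y) = φ(−x,y) = φ(x,−y) for all (x,y)) and satisfy ∫φ dμ_{(0,0)} ≤ α. For b > 0 set θ(b) := (√(b·ν₁), √(b·ν₂)). Then for every φ ∈ Φ_α there exists b̄ > 0 such that for all 0 < b < b̄: ∫φ dμ_{θ(b)} ≤ ∫ψ dμ_{θ(b)}. -/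
/-
For a test `f` that is even in each coordinate, the likelihood ratio of `N(θ, I)` against
`N(0, I)` symmetrises to `exp (-|θ|² / 2) cosh (θ₁ x) cosh (θ₂ y)`. At
`θ(b) = (√(b ν₁), √(b ν₂))` the power of `f` is therefore `exp (-b (ν₁ + ν₂) / 2) ∫ f K_b`
under the standard Gaussian, with `K_b = cosh (√(b ν₁) x) cosh (√(b ν₂) y)`.

The kernel satisfies `K_b ≥ 1 + b T / 2` for `T = ν₁ x² + ν₂ y²`, and
`∫ K_b = exp (b (ν₁ + ν₂) / 2) = 1 + b ∫ T / 2 + o(b)`. The difference `D = ψ - φ` has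
`|D| ≤ 1`, `∫ D ≥ 0` (size) and `D (T - c) ≥ 0` (Neyman–Pearson shape), so
`∫ D K_b ≥ (b / 2) ∫ D (T - c) - o(b)`, which is nonnegative for small `b` unless
`∫ D (T - c) = 0`; in that case `D = 0` almost everywhere, because `{T = c}` is a null set.
-/

open MeasureTheory ProbabilityTheory Real Filter Topology Asymptotics
open scoped NNReal

lemma one_add_sq_div_two_le_cosh (u : ℝ) : 1 + u ^ 2 / 2 ≤ cosh u := by
  have h := sum_le_hasSum (Finset.range 2)
    (fun n _ => div_nonneg (by rw [pow_mul]; positivity) (by positivity)) (hasSum_cosh u)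
  simpa [Finset.sum_range_succ] using h

lemma one_add_sq_add_sq_div_two_le_cosh_mul_cosh (u v : ℝ) :
    1 + (u ^ 2 + v ^ 2) / 2 ≤ cosh u * cosh v := by
  have hu := one_add_sq_div_two_le_cosh u
  have hv := one_add_sq_div_two_le_cosh v
  nlinarith [mul_nonneg (sq_nonneg u) (sq_nonneg v)]

lemma one_add_mul_quadratic_div_two_le_cosh_mul_cosh {ν₁ ν₂ b : ℝ} (hν₁ : 0 ≤ ν₁)
    (hν₂ : 0 ≤ ν₂) (hb : 0 ≤ b) (p : ℝ × ℝ) :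
    1 + b * (ν₁ * p.1 ^ 2 + ν₂ * p.2 ^ 2) / 2 ≤
      cosh (√(b * ν₁) * p.1) * cosh (√(b * ν₂) * p.2) := by
  have := one_add_sq_add_sq_div_two_le_cosh_mul_cosh (√(b * ν₁) * p.1) (√(b * ν₂) * p.2)
  rw [mul_pow, mul_pow, sq_sqrt (by positivity), sq_sqrt (by positivity)] at this
  linarith

lemma isLittleO_exp_mul_sub_one_sub_mul (s : ℝ) :
    (fun b => exp (b * s) - 1 - b * s) =o[𝓝 0] id := by
  have h := (hasDerivAt_mul_const s (x := (0 : ℝ))).exp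
  rw [hasDerivAt_iff_isLittleO_nhds_zero] at h
  simp only [zero_add, zero_mul, exp_zero, smul_eq_mul, one_mul] at h
  exact h

lemma norm_le_one_of_mem_Icc {x : ℝ} (hx : x ∈ Set.Icc 0 1) : ‖x‖ ≤ 1 :=
  (Real.norm_of_nonneg hx.1).trans_le hx.2

section MeasureSpace

variable {Ω : Type*} [MeasurableSpace Ω] {μ : Measure Ω}

lemma integral_mul_eq_integral_mul_average {σ : Ω → Ω} (hσ : MeasurePreserving σ μ μ)
    (hσe : MeasurableEmbedding σ) {f g : Ω → ℝ} (hf : ∀ ω, f (σ ω) = f ω)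
    (hfg : Integrable (fun ω => f ω * g ω) μ) :
    ∫ ω, f ω * g ω ∂μ = ∫ ω, f ω * ((g ω + g (σ ω)) / 2) ∂μ := by
  have hcomp : ∫ ω, f ω * g (σ ω) ∂μ = ∫ ω, f ω * g ω ∂μ := by
    simpa only [hf] using hσ.integral_comp hσe (fun ω => f ω * g ω)
  have hfgσ : Integrable (fun ω => f ω * g (σ ω)) μ := by
    simpa only [Function.comp_def, hf] using (hσ.integrable_comp_emb hσe).2 hfg
  simp_rw [mul_div_assoc', mul_add]
  rw [integral_div, integral_add hfg hfgσ, hcomp]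
  ring

variable {D T : Ω → ℝ} {c : ℝ}

lemma ae_eq_zero_of_integral_mul_sub_eq_zero (hDT : ∀ ω, 0 ≤ D ω * (T ω - c))
    (hint : Integrable (fun ω => D ω * (T ω - c)) μ) (hTc : ∀ᵐ ω ∂μ, T ω ≠ c)
    (h : ∫ ω, D ω * (T ω - c) ∂μ = 0) : D =ᵐ[μ] 0 := by
  filter_upwards [(integral_eq_zero_iff_of_nonneg hDT hint).1 h, hTc] with ω hω hTω
  exact (mul_eq_zero.1 hω).resolve_right (sub_ne_zero.2 hTω)

variable [IsProbabilityMeasure μ]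

lemma integral_mul_nonneg_of_remainder_le {k : Ω → ℝ} {b : ℝ}
    (hDm : AEStronglyMeasurable D μ) (hD : ∀ ω, |D ω| ≤ 1) (hD₀ : 0 ≤ ∫ ω, D ω ∂μ)
    (hb : 0 ≤ b) (hc : 0 ≤ c) (hT : Integrable T μ) (hk : Integrable k μ)
    (hkT : ∀ ω, 1 + b * T ω / 2 ≤ k ω)
    (hrem : ∫ ω, k ω ∂μ - 1 - b * (∫ ω, T ω ∂μ) / 2 ≤ b / 2 * ∫ ω, D ω * (T ω - c) ∂μ) :
    0 ≤ ∫ ω, D ω * k ω ∂μ := by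
  have hD' : ∀ ω, ‖D ω‖ ≤ 1 := fun ω => (Real.norm_eq_abs _).trans_le (hD ω)
  have hDint : Integrable D μ := .of_bound hDm 1 (ae_of_all _ hD')
  have hDTint : Integrable (fun ω => D ω * (T ω - c)) μ :=
    (hT.sub (integrable_const c)).bdd_mul hDm (ae_of_all _ hD')
  have hlin : Integrable (fun ω => (1 + b * c / 2) * D ω + b / 2 * (D ω * (T ω - c))) μ :=
    (hDint.const_mul _).add (hDTint.const_mul _)
  have hR : Integrable (fun ω => k ω - 1 - b * T ω / 2) μ :=
    (hk.sub (integrable_const 1)).sub ((hT.const_mul b).div_const 2)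
  calc 0 ≤ (1 + b * c / 2) * ∫ ω, D ω ∂μ + b / 2 * ∫ ω, D ω * (T ω - c) ∂μ
          - (∫ ω, k ω ∂μ - 1 - b * (∫ ω, T ω ∂μ) / 2) := by
        nlinarith [mul_nonneg (by positivity : 0 ≤ b * c / 2) hD₀]
    _ = ∫ ω, ((1 + b * c / 2) * D ω + b / 2 * (D ω * (T ω - c))
          - (k ω - 1 - b * T ω / 2)) ∂μ := by
        rw [integral_sub hlin hR, integral_add (hDint.const_mul _) (hDTint.const_mul _),
          integral_const_mul, integral_const_mul, integral_sub (f := fun ω => k ω - 1)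
          (hk.sub (integrable_const 1)) ((hT.const_mul b).div_const 2),
          integral_sub hk (integrable_const 1), integral_div, integral_const_mul]
        simp
    _ ≤ ∫ ω, D ω * k ω ∂μ := by
        refine integral_mono (hlin.sub hR) (hk.bdd_mul hDm (ae_of_all _ hD')) fun ω => ?_
        -- with `R = k - 1 - b T / 2 ≥ 0`: `D k = D (1 + b T / 2) + D R ≥ D (1 + b T / 2) - R`
        have hRω : 0 ≤ k ω - 1 - b * T ω / 2 := by linarith [hkT ω]
        have hDω : 0 ≤ 1 + D ω := by linarith [(abs_le.1 (hD ω)).1]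
        nlinarith [mul_nonneg hDω hRω]

theorem eventually_integral_mul_nonneg_of_expansion {K : ℝ → Ω → ℝ}
    (hDm : AEStronglyMeasurable D μ) (hD : ∀ ω, |D ω| ≤ 1) (hD₀ : 0 ≤ ∫ ω, D ω ∂μ)
    (hDT : ∀ ω, 0 ≤ D ω * (T ω - c)) (hc : 0 ≤ c) (hTc : ∀ᵐ ω ∂μ, T ω ≠ c)
    (hT : Integrable T μ) (hK : ∀ b > 0, Integrable (K b) μ)
    (hKT : ∀ b > 0, ∀ ω, 1 + b * T ω / 2 ≤ K b ω)
    (hKo : (fun b => ∫ ω, K b ω ∂μ - 1 - b * (∫ ω, T ω ∂μ) / 2) =o[𝓝[>] 0] id) :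
    ∀ᶠ b in 𝓝[>] 0, 0 ≤ ∫ ω, D ω * K b ω ∂μ := by
  rcases (integral_nonneg (f := fun ω => D ω * (T ω - c)) hDT).eq_or_lt with hJ | hJ
  · have hD0 := ae_eq_zero_of_integral_mul_sub_eq_zero hDT
      ((hT.sub (integrable_const c)).bdd_mul hDm
        (ae_of_all _ fun ω => (Real.norm_eq_abs _).trans_le (hD ω))) hTc hJ.symm
    refine Eventually.of_forall fun b => (integral_eq_zero_of_ae ?_).ge
    filter_upwards [hD0] with ω hω
    simp [hω]
  filter_upwards [self_mem_nhdsWithin, hKo.bound (half_pos hJ)] with b (hb : 0 < b) hbound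
  refine integral_mul_nonneg_of_remainder_le hDm hD hD₀ hb.le hc hT (hK b hb) (hKT b hb) ?_
  rw [Real.norm_eq_abs, Real.norm_eq_abs, id, abs_of_pos hb] at hbound
  linarith [le_abs_self (∫ ω, K b ω ∂μ - 1 - b * (∫ ω, T ω ∂μ) / 2)]

end MeasureSpace

lemma measure_prod_quadratic_levelSet_eq_zero {μ ν : Measure ℝ} [NullSingletonClass μ]
    [SFinite μ] [SFinite ν] {a b c : ℝ} (ha : a ≠ 0) :
    μ.prod ν {p | a * p.1 ^ 2 + b * p.2 ^ 2 = c} = 0 := by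
  rw [Measure.prod_apply_symm (measurableSet_eq_fun (by fun_prop) measurable_const)]
  refine lintegral_eq_zero_of_ae_eq_zero (ae_of_all _ fun y => ?_)
  refine measure_mono_null (t := {√((c - b * y ^ 2) / a), -√((c - b * y ^ 2) / a)})
    (fun x (hx : a * x ^ 2 + b * y ^ 2 = c) => ?_) ((Set.toFinite _).measure_zero μ)
  have hd : x ^ 2 = (c - b * y ^ 2) / a := by field_simp; linarith
  have hx : x ^ 2 = √((c - b * y ^ 2) / a) ^ 2 := by rw [sq_sqrt (hd ▸ sq_nonneg x), hd]
  simpa using sq_eq_sq_iff_eq_or_eq_neg.1 hx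

section Gaussian

variable {v : ℝ≥0}

lemma integrable_cosh_mul_gaussianReal (a : ℝ) :
    Integrable (fun x => cosh (a * x)) (gaussianReal 0 v) := by
  simp_rw [cosh_eq, ← neg_mul]
  exact ((integrable_exp_mul_gaussianReal a).add
    (integrable_exp_mul_gaussianReal (-a))).div_const 2

lemma integral_cosh_mul_gaussianReal (a : ℝ) :
    ∫ x, cosh (a * x) ∂gaussianReal 0 v = exp (v * a ^ 2 / 2) := by
  have h := fun t => congrFun (mgf_id_gaussianReal (μ := 0) (v := v)) t
  simp only [mgf, id] at h
  simp_rw [cosh_eq, ← neg_mul]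
  rw [integral_div, integral_add (integrable_exp_mul_gaussianReal a)
    (integrable_exp_mul_gaussianReal (-a)), h, h]
  ring_nf

lemma integral_sq_gaussianReal : ∫ x, x ^ 2 ∂gaussianReal 0 v = v := by
  have h := variance_eq_sub (memLp_id_gaussianReal (μ := 0) (v := v) 2)
  simp only [variance_id_gaussianReal, id, Pi.pow_apply, integral_id_gaussianReal] at h
  simpa using h.symm

lemma measurePreserving_neg_gaussianReal :
    MeasurePreserving (fun x : ℝ => -x) (gaussianReal 0 v) (gaussianReal 0 v) :=
  ⟨measurable_neg, by rw [gaussianReal_map_neg, neg_zero]⟩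

end Gaussian

lemma gaussianReal_eq_withDensity (θ : ℝ) :
    gaussianReal θ 1 = (gaussianReal 0 1).withDensity
      (fun x => ENNReal.ofReal (exp (θ * x - θ ^ 2 / 2))) := by
  rw [gaussianReal_of_var_ne_zero _ one_ne_zero, gaussianReal_of_var_ne_zero _ one_ne_zero,
    ← withDensity_mul _ (measurable_gaussianPDF _ _) (by fun_prop)]
  congr 1
  ext x
  simp only [gaussianPDF, Pi.mul_apply, ← ENNReal.ofReal_mul (gaussianPDFReal_nonneg _ _ _)]
  congr 1
  simp only [gaussianPDFReal, NNReal.coe_one, mul_one, sub_zero, mul_assoc, ← exp_add]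
  ring_nf

local notation "μ₀" => Measure.prod (gaussianReal 0 1) (gaussianReal 0 1)

lemma gaussianReal_prod_eq_withDensity (θ₁ θ₂ : ℝ) :
    (gaussianReal θ₁ 1).prod (gaussianReal θ₂ 1) =
      Measure.withDensity μ₀
        (fun p => ENNReal.ofReal (exp (θ₁ * p.1 + θ₂ * p.2 - (θ₁ ^ 2 + θ₂ ^ 2) / 2))) := by
  rw [gaussianReal_eq_withDensity θ₁, gaussianReal_eq_withDensity θ₂,
    prod_withDensity (by fun_prop) (by fun_prop)]
  congr 1
  ext p
  rw [← ENNReal.ofReal_mul (exp_nonneg _), ← exp_add]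
  ring_nf

lemma integral_mul_exp_eq_integral_mul_cosh {f : ℝ × ℝ → ℝ} (hfm : AEStronglyMeasurable f μ₀)
    {C : ℝ} (hfC : ∀ p, ‖f p‖ ≤ C)
    (hf₁ : ∀ x y : ℝ, f (x, y) = f (-x, y)) (hf₂ : ∀ x y : ℝ, f (x, y) = f (x, -y)) (θ₁ θ₂ : ℝ) :
    ∫ p, f p * exp (θ₁ * p.1 + θ₂ * p.2) ∂μ₀ =
      ∫ p, f p * (cosh (θ₁ * p.1) * cosh (θ₂ * p.2)) ∂μ₀ := by
  have hint : ∀ {g₁ g₂ : ℝ → ℝ}, Integrable g₁ (gaussianReal 0 1) →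
      Integrable g₂ (gaussianReal 0 1) → Integrable (fun p => f p * (g₁ p.1 * g₂ p.2)) μ₀ :=
    fun h₁ h₂ => (h₁.mul_prod h₂).bdd_mul hfm (ae_of_all _ hfC)
  have hneg : MeasurableEmbedding (fun x : ℝ => -x) :=
    (MeasurableEquiv.neg ℝ).measurableEmbedding
  have h₁ := integral_mul_eq_integral_mul_average
    ((measurePreserving_neg_gaussianReal (v := 1)).prod (MeasurePreserving.id _))
    (hneg.prodMap MeasurableEmbedding.id) (g := fun p => exp (θ₁ * p.1) * exp (θ₂ * p.2))
    (fun p => (hf₁ p.1 p.2).symm)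
    (hint (integrable_exp_mul_gaussianReal θ₁) (integrable_exp_mul_gaussianReal θ₂))
  have h₂ := integral_mul_eq_integral_mul_average
    ((MeasurePreserving.id _).prod (measurePreserving_neg_gaussianReal (v := 1)))
    (MeasurableEmbedding.id.prodMap hneg) (g := fun p => cosh (θ₁ * p.1) * exp (θ₂ * p.2))
    (fun p => (hf₂ p.1 p.2).symm)
    (hint (integrable_cosh_mul_gaussianReal θ₁) (integrable_exp_mul_gaussianReal θ₂))
  simp only [Prod.map_fst, Prod.map_snd, id, mul_neg] at h₁ h₂
  calc ∫ p, f p * exp (θ₁ * p.1 + θ₂ * p.2) ∂μ₀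
      = ∫ p, f p * (cosh (θ₁ * p.1) * exp (θ₂ * p.2)) ∂μ₀ := by
        simp_rw [exp_add, h₁, cosh_eq]; congr 1 with p; ring
    _ = ∫ p, f p * (cosh (θ₁ * p.1) * cosh (θ₂ * p.2)) ∂μ₀ := by
        rw [h₂]; simp_rw [cosh_eq (θ₂ * _)]; congr 1 with p; ring

lemma integral_gaussianReal_prod_eq_exp_mul_integral_cosh {f : ℝ × ℝ → ℝ}
    (hfm : AEStronglyMeasurable f μ₀) {C : ℝ} (hfC : ∀ p, ‖f p‖ ≤ C)
    (hf₁ : ∀ x y : ℝ, f (x, y) = f (-x, y)) (hf₂ : ∀ x y : ℝ, f (x, y) = f (x, -y)) (θ₁ θ₂ : ℝ) :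
    ∫ p, f p ∂(gaussianReal θ₁ 1).prod (gaussianReal θ₂ 1) =
      exp (-(θ₁ ^ 2 + θ₂ ^ 2) / 2) * ∫ p, f p * (cosh (θ₁ * p.1) * cosh (θ₂ * p.2)) ∂μ₀ := by
  rw [gaussianReal_prod_eq_withDensity, integral_withDensity_eq_integral_toReal_smul
    (by fun_prop) (ae_of_all _ fun _ => ENNReal.ofReal_lt_top),
    ← integral_mul_exp_eq_integral_mul_cosh hfm hfC hf₁ hf₂, ← integral_const_mul]
  congr 1 with p
  rw [ENNReal.toReal_ofReal (exp_nonneg _), smul_eq_mul, sub_eq_add_neg, exp_add, neg_div]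
  ring

lemma integrable_cosh_mul_cosh_gaussianReal_prod (θ₁ θ₂ : ℝ) :
    Integrable (fun p : ℝ × ℝ => cosh (θ₁ * p.1) * cosh (θ₂ * p.2)) μ₀ :=
  (integrable_cosh_mul_gaussianReal θ₁).mul_prod (integrable_cosh_mul_gaussianReal θ₂)

lemma integral_cosh_mul_cosh_gaussianReal_prod (θ₁ θ₂ : ℝ) :
    ∫ p : ℝ × ℝ, cosh (θ₁ * p.1) * cosh (θ₂ * p.2) ∂μ₀ = exp ((θ₁ ^ 2 + θ₂ ^ 2) / 2) := by
  rw [integral_prod_mul (fun x => cosh (θ₁ * x)) (fun y => cosh (θ₂ * y)),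
    integral_cosh_mul_gaussianReal, integral_cosh_mul_gaussianReal, ← exp_add]
  simp only [NNReal.coe_one, one_mul, add_div]

lemma integrable_quadratic_gaussianReal_prod (ν₁ ν₂ : ℝ) :
    Integrable (fun p : ℝ × ℝ => ν₁ * p.1 ^ 2 + ν₂ * p.2 ^ 2) μ₀ :=
  (((memLp_id_gaussianReal 2).integrable_sq.comp_fst _).const_mul ν₁).add
    (((memLp_id_gaussianReal 2).integrable_sq.comp_snd _).const_mul ν₂)

lemma integral_quadratic_gaussianReal_prod (ν₁ ν₂ : ℝ) :
    ∫ p : ℝ × ℝ, ν₁ * p.1 ^ 2 + ν₂ * p.2 ^ 2 ∂μ₀ = ν₁ + ν₂ := by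
  have h₁ : Integrable (fun p : ℝ × ℝ => p.1 ^ 2) μ₀ :=
    (memLp_id_gaussianReal 2).integrable_sq.comp_fst _
  have h₂ : Integrable (fun p : ℝ × ℝ => p.2 ^ 2) μ₀ :=
    (memLp_id_gaussianReal 2).integrable_sq.comp_snd _
  rw [integral_add (h₁.const_mul ν₁) (h₂.const_mul ν₂), integral_const_mul, integral_const_mul,
    integral_fun_fst (fun x => x ^ 2), integral_fun_snd (fun x => x ^ 2),
    integral_sq_gaussianReal]
  simp

lemma isLittleO_integral_cosh_mul_cosh_sub {ν₁ ν₂ : ℝ} (hν₁ : 0 ≤ ν₁) (hν₂ : 0 ≤ ν₂) :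
    (fun b => ∫ p : ℝ × ℝ, cosh (√(b * ν₁) * p.1) * cosh (√(b * ν₂) * p.2) ∂μ₀ - 1
      - b * (∫ p : ℝ × ℝ, ν₁ * p.1 ^ 2 + ν₂ * p.2 ^ 2 ∂μ₀) / 2) =o[𝓝[>] 0] id := by
  refine ((isLittleO_exp_mul_sub_one_sub_mul ((ν₁ + ν₂) / 2)).mono nhdsWithin_le_nhds).congr'
    ?_ EventuallyEq.rfl
  filter_upwards [self_mem_nhdsWithin] with b (hb : 0 < b)
  rw [integral_cosh_mul_cosh_gaussianReal_prod, integral_quadratic_gaussianReal_prod,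
    sq_sqrt (by positivity), sq_sqrt (by positivity)]
  ring_nf

noncomputable def linearCombinationTest (ν₁ ν₂ c : ℝ) (p : ℝ × ℝ) : ℝ :=
  if c ≤ ν₁ * p.1 ^ 2 + ν₂ * p.2 ^ 2 then 1 else 0

section LinearCombinationTest

variable (ν₁ ν₂ c : ℝ)

lemma measurable_linearCombinationTest : Measurable (linearCombinationTest ν₁ ν₂ c) :=
  Measurable.ite (measurableSet_le measurable_const (by fun_prop)) measurable_const
    measurable_const

lemma linearCombinationTest_mem_Icc (p : ℝ × ℝ) :
    linearCombinationTest ν₁ ν₂ c p ∈ Set.Icc 0 1 := by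
  unfold linearCombinationTest; split_ifs <;> simp

lemma linearCombinationTest_neg_fst (x y : ℝ) :
    linearCombinationTest ν₁ ν₂ c (x, y) = linearCombinationTest ν₁ ν₂ c (-x, y) := by
  simp [linearCombinationTest]

lemma linearCombinationTest_neg_snd (x y : ℝ) :
    linearCombinationTest ν₁ ν₂ c (x, y) = linearCombinationTest ν₁ ν₂ c (x, -y) := by
  simp [linearCombinationTest]

lemma integral_linearCombinationTest (μ : Measure (ℝ × ℝ)) [IsFiniteMeasure μ] :
    ∫ p, linearCombinationTest ν₁ ν₂ c p ∂μ =
      μ.real {p | c ≤ ν₁ * p.1 ^ 2 + ν₂ * p.2 ^ 2} := by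
  rw [← integral_indicator_one (measurableSet_le measurable_const (by fun_prop))]
  rfl

end LinearCombinationTest

theorem eventually_integral_mul_cosh_le_linearCombinationTest {ν₁ ν₂ c : ℝ} (hν₁ : 0 < ν₁)
    (hν₂ : 0 ≤ ν₂) (hc : 0 ≤ c) {φ : ℝ × ℝ → ℝ} (hφm : AEStronglyMeasurable φ μ₀)
    (hφ : ∀ p, φ p ∈ Set.Icc 0 1)
    (hlevel : ∫ p, φ p ∂μ₀ ≤ ∫ p, linearCombinationTest ν₁ ν₂ c p ∂μ₀) :
    ∀ᶠ b in 𝓝[>] 0,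
      ∫ p, φ p * (cosh (√(b * ν₁) * p.1) * cosh (√(b * ν₂) * p.2)) ∂μ₀ ≤
        ∫ p, linearCombinationTest ν₁ ν₂ c p *
          (cosh (√(b * ν₁) * p.1) * cosh (√(b * ν₂) * p.2)) ∂μ₀ := by
  set ψ := linearCombinationTest ν₁ ν₂ c
  have hψm : AEStronglyMeasurable ψ μ₀ :=
    (measurable_linearCombinationTest ν₁ ν₂ c).aestronglyMeasurable
  have hψ := linearCombinationTest_mem_Icc ν₁ ν₂ c
  have hφ1 p := norm_le_one_of_mem_Icc (hφ p)
  have hψ1 p := norm_le_one_of_mem_Icc (hψ p)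
  have hK := integrable_cosh_mul_cosh_gaussianReal_prod
  have hTc : ∀ᵐ p ∂μ₀, ν₁ * p.1 ^ 2 + ν₂ * p.2 ^ 2 ≠ c := by
    have := nullSingletonClass_gaussianReal (μ := 0) (v := 1) one_ne_zero
    simpa only [ae_iff, ne_eq, not_not] using measure_prod_quadratic_levelSet_eq_zero
      (μ := gaussianReal 0 1) (ν := gaussianReal 0 1) (b := ν₂) (c := c) hν₁.ne'
  have hDT p : 0 ≤ (ψ p - φ p) * (ν₁ * p.1 ^ 2 + ν₂ * p.2 ^ 2 - c) := by
    simp only [ψ, linearCombinationTest]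
    split_ifs <;> nlinarith [(hφ p).1, (hφ p).2]
  have hD p : |ψ p - φ p| ≤ 1 :=
    abs_sub_le_iff.2 ⟨by linarith [(hψ p).2, (hφ p).1], by linarith [(hψ p).1, (hφ p).2]⟩
  have hD₀ : 0 ≤ ∫ p, (ψ p - φ p) ∂μ₀ := by
    rw [integral_sub (.of_bound hψm 1 (ae_of_all _ hψ1)) (.of_bound hφm 1 (ae_of_all _ hφ1))]
    linarith
  filter_upwards [eventually_integral_mul_nonneg_of_expansion (hψm.sub hφm) hD hD₀ hDT hc hTc
    (integrable_quadratic_gaussianReal_prod ν₁ ν₂) (fun _ _ => hK _ _)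
    (fun b hb => one_add_mul_quadratic_div_two_le_cosh_mul_cosh hν₁.le hν₂ hb.le)
    (isLittleO_integral_cosh_mul_cosh_sub hν₁.le hν₂)] with b hb
  rw [← sub_nonneg, ← integral_sub ((hK _ _).bdd_mul hψm (ae_of_all _ hψ1))
    ((hK _ _).bdd_mul hφm (ae_of_all _ hφ1))]
  simpa only [Pi.sub_apply, sub_mul] using hb

theorem stmt_12_general (α : ℝ) (hα : α ∈ Set.Ioo (0 : ℝ) 1)
    (ν₁ ν₂ : ℝ) (h2 : 0 ≤ ν₂) (h1 : 0 < ν₁)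
    (μ : ℝ × ℝ → Measure (ℝ × ℝ))
    (hμ : ∀ θ : ℝ × ℝ, μ θ = (gaussianReal θ.1 1).prod (gaussianReal θ.2 1))
    (c : ℝ) (hc : 0 < c)
    (hsize : μ (0, 0) {p : ℝ × ℝ | c ≤ ν₁ * p.1 ^ 2 + ν₂ * p.2 ^ 2} = ENNReal.ofReal α)
    (ψ : ℝ × ℝ → ℝ)
    (hψ : ψ = fun p => if c ≤ ν₁ * p.1 ^ 2 + ν₂ * p.2 ^ 2 then (1 : ℝ) else 0)
    (φ : ℝ × ℝ → ℝ) (hφm : Measurable φ) (hφ01 : ∀ p, φ p ∈ Set.Icc (0 : ℝ) 1)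
    (hφeven1 : ∀ x y : ℝ, φ (x, y) = φ (-x, y))
    (hφeven2 : ∀ x y : ℝ, φ (x, y) = φ (x, -y))
    (hφlevel : (∫ p, φ p ∂(μ (0, 0))) ≤ α) :
    ∃ bbar > (0 : ℝ), ∀ b : ℝ, 0 < b → b < bbar →
      (∫ p, φ p ∂(μ (Real.sqrt (b * ν₁), Real.sqrt (b * ν₂))))
        ≤ ∫ p, ψ p ∂(μ (Real.sqrt (b * ν₁), Real.sqrt (b * ν₂))) := by
  obtain rfl : ψ = linearCombinationTest ν₁ ν₂ c := hψ
  have hμ₀ : μ (0, 0) = μ₀ := hμ (0, 0)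
  have hlevel : ∫ p, φ p ∂μ₀ ≤ ∫ p, linearCombinationTest ν₁ ν₂ c p ∂μ₀ := by
    rwa [integral_linearCombinationTest, measureReal_def, ← hμ₀, hsize,
      ENNReal.toReal_ofReal hα.1.le]
  obtain ⟨bbar, hbbar, hsub⟩ := mem_nhdsGT_iff_exists_Ioo_subset.1
    (eventually_integral_mul_cosh_le_linearCombinationTest h1 h2 hc.le hφm.aestronglyMeasurable
      hφ01 hlevel)
  refine ⟨bbar, hbbar, fun b hb hbb => ?_⟩
  rw [hμ, integral_gaussianReal_prod_eq_exp_mul_integral_cosh hφm.aestronglyMeasurable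
      (fun p => norm_le_one_of_mem_Icc (hφ01 p)) hφeven1 hφeven2,
    integral_gaussianReal_prod_eq_exp_mul_integral_cosh
      (measurable_linearCombinationTest ν₁ ν₂ c).aestronglyMeasurable
      (fun p => norm_le_one_of_mem_Icc (linearCombinationTest_mem_Icc ν₁ ν₂ c p))
      (linearCombinationTest_neg_fst ν₁ ν₂ c) (linearCombinationTest_neg_snd ν₁ ν₂ c)]
  exact mul_le_mul_of_nonneg_left (hsub ⟨hb, hbb⟩) (exp_nonneg _)

/-- Theorem 1(i) of the paper, local power optimality: when the squared
means are proportional to the eigenvalue weights `(ν₁, ν₂)`, the test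
`ψ = 1{ν₁x² + ν₂y² ≥ c}` has weakly higher power than any size-`α` test that is even in
each coordinate, for all sufficiently small proportionality constants `b`. -/
theorem stmt_12 (α : ℝ) (hα : α ∈ Set.Ioo (0 : ℝ) 1)
    (ν₁ ν₂ : ℝ) (h21 : ν₂ ≤ ν₁) (h2 : 0 ≤ ν₂) (h1 : 0 < ν₁)
    (μ : ℝ × ℝ → Measure (ℝ × ℝ))
    (hμ : ∀ θ : ℝ × ℝ, μ θ = (gaussianReal θ.1 1).prod (gaussianReal θ.2 1))
    (c : ℝ) (hc : 0 < c)
    (hsize : μ (0, 0) {p : ℝ × ℝ | c ≤ ν₁ * p.1 ^ 2 + ν₂ * p.2 ^ 2} = ENNReal.ofReal α)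
    (ψ : ℝ × ℝ → ℝ)
    (hψ : ψ = fun p => if c ≤ ν₁ * p.1 ^ 2 + ν₂ * p.2 ^ 2 then (1 : ℝ) else 0)
    (φ : ℝ × ℝ → ℝ) (hφm : Measurable φ) (hφ01 : ∀ p, φ p ∈ Set.Icc (0 : ℝ) 1)
    (hφeven1 : ∀ x y : ℝ, φ (x, y) = φ (-x, y))
    (hφeven2 : ∀ x y : ℝ, φ (x, y) = φ (x, -y))
    (hφlevel : (∫ p, φ p ∂(μ (0, 0))) ≤ α) :
    ∃ bbar > (0 : ℝ), ∀ b : ℝ, 0 < b → b < bbar →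
      (∫ p, φ p ∂(μ (Real.sqrt (b * ν₁), Real.sqrt (b * ν₂))))
        ≤ ∫ p, ψ p ∂(μ (Real.sqrt (b * ν₁), Real.sqrt (b * ν₂))) :=
  stmt_12_general α hα ν₁ ν₂ h2 h1 μ hμ c hc hsize ψ hψ φ hφm hφ01 hφeven1 hφeven2 hφlevel
end

section
/- Let Φ₁ > 0, Ψ > 0, ρ ∈ (−1,1), ρ̃ ∈ ℝ, and θ ∈ ℝ. Define Ψ_h := Ψ − 2ρ̃·ρ·√(Φ₁Ψ) + ρ̃²·Φ₁. Then: (i) Ψ_h = Ψ·((1 − ρ²) + (ρ̃·√(Φ₁/Ψ) − ρ)²), so in particular Ψ_h > 0; (ii) θ²·Ψ/Ψ_h ≤ θ²/(1 − ρ²), with equality if and only if θ = 0 or ρ̃·√Φ₁ = ρ·√Ψ. -/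
/-! Completing the square in `√Ψ` writes `Ψ_h = Ψ (1 - ρ²) + (ρ̃ √Φ₁ - ρ √Ψ)²`, so `Ψ_h / Ψ` is
`1 - ρ²` plus a square. Hence `θ² Ψ / Ψ_h = θ² / (1 - ρ² + square)`, which is at most
`θ² / (1 - ρ²)`, with equality exactly when `θ` or the square vanishes. -/

theorem div_add_eq_div_iff {K : Type*} [Field K] {x a b : K} (ha : a ≠ 0) (hab : a + b ≠ 0) :
    x / (a + b) = x / a ↔ x = 0 ∨ b = 0 := by
  rw [div_eq_div_iff hab ha, mul_add, left_eq_add, mul_eq_zero]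

theorem hlim_variance_eq (Φ₁ Ψ ρ ρt : ℝ) (hΦ₁ : 0 ≤ Φ₁) (hΨ : 0 < Ψ) :
    Ψ - 2 * ρt * ρ * √(Φ₁ * Ψ) + ρt ^ 2 * Φ₁ =
      Ψ * ((1 - ρ ^ 2) + (ρt * √(Φ₁ / Ψ) - ρ) ^ 2) := by
  obtain ⟨s, hs, rfl⟩ : ∃ s, 0 ≤ s ∧ Φ₁ = s ^ 2 :=
    ⟨√Φ₁, Real.sqrt_nonneg _, (Real.sq_sqrt hΦ₁).symm⟩
  obtain ⟨t, ht, rfl⟩ : ∃ t, 0 < t ∧ Ψ = t ^ 2 :=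
    ⟨√Ψ, Real.sqrt_pos.mpr hΨ, (Real.sq_sqrt hΨ.le).symm⟩
  rw [← mul_pow, ← div_pow, Real.sqrt_sq (by positivity), Real.sqrt_sq (by positivity)]
  field_simp
  ring

theorem mul_sqrt_div_eq_iff {Φ₁ Ψ : ℝ} (ρ ρt : ℝ) (hΨ : 0 < Ψ) :
    ρt * √(Φ₁ / Ψ) = ρ ↔ ρt * √Φ₁ = ρ * √Ψ := by
  rw [Real.sqrt_div' _ hΨ.le, mul_div_assoc', div_eq_iff (Real.sqrt_pos.mpr hΨ).ne']

/-- noncentrality comparison between the HLIM-based Wald test and the CLC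
test: with `Ψ_h = Ψ − 2ρ̃ρ√(Φ₁Ψ) + ρ̃²Φ₁` one has
`Ψ_h = Ψ((1−ρ²) + (ρ̃√(Φ₁/Ψ) − ρ)²) > 0` and
`θ²Ψ/Ψ_h ≤ θ²/(1−ρ²)` with equality iff `θ = 0` or `ρ̃√Φ₁ = ρ√Ψ`. -/
theorem stmt_17 (Φ₁ Ψ ρ ρt θ : ℝ) (hΦ₁ : 0 < Φ₁) (hΨ : 0 < Ψ)
    (hρ : ρ ∈ Set.Ioo (-1 : ℝ) 1)
    (Ψh : ℝ) (hΨh : Ψh = Ψ - 2 * ρt * ρ * Real.sqrt (Φ₁ * Ψ) + ρt ^ 2 * Φ₁) :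
    (Ψh = Ψ * ((1 - ρ ^ 2) + (ρt * Real.sqrt (Φ₁ / Ψ) - ρ) ^ 2) ∧ 0 < Ψh) ∧
      (θ ^ 2 * Ψ / Ψh ≤ θ ^ 2 / (1 - ρ ^ 2) ∧
        (θ ^ 2 * Ψ / Ψh = θ ^ 2 / (1 - ρ ^ 2) ↔
          θ = 0 ∨ ρt * Real.sqrt Φ₁ = ρ * Real.sqrt Ψ)) := by
  obtain ⟨hρl, hρr⟩ := hρ
  have hq : 0 < 1 - ρ ^ 2 := by nlinarith
  have hid := hΨh.trans (hlim_variance_eq Φ₁ Ψ ρ ρt hΦ₁.le hΨ)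
  have hqb : 0 < (1 - ρ ^ 2) + (ρt * √(Φ₁ / Ψ) - ρ) ^ 2 := by positivity
  have hnorm : θ ^ 2 * Ψ / Ψh = θ ^ 2 / ((1 - ρ ^ 2) + (ρt * √(Φ₁ / Ψ) - ρ) ^ 2) := by
    rw [hid, mul_comm Ψ, mul_div_mul_right _ _ hΨ.ne']
  refine ⟨⟨hid, hid ▸ mul_pos hΨ hqb⟩, ?_, ?_⟩
  · rw [hnorm]
    exact div_le_div_of_nonneg_left (sq_nonneg θ) hq (le_add_of_nonneg_right (sq_nonneg _))
  · rw [hnorm, div_add_eq_div_iff hq.ne' hqb.ne', pow_eq_zero_iff two_ne_zero,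
      pow_eq_zero_iff two_ne_zero, sub_eq_zero, mul_sqrt_div_eq_iff ρ ρt hΨ]
end

section
/- Let P be an n×n real matrix that is symmetric and idempotent (P⊤ = P and P·P = P), let Π ∈ ℝⁿ, and for each i define ω_i := Σ_{j≠i} P_{ij}·Π_j. Then: (i) for each i, Σ_{j≠i} P_{ij}² = P_{ii}·(1 − P_{ii}), and consequently 0 ≤ P_{ii} ≤ 1 and Σ_{j≠i} P_{ij}² ≤ P_{ii}; (ii) for each i, ω_i² ≤ P_{ii} · Σ_{j=1}^{n} Π_j²; (iii) Σ_{i=1}^{n} ω_i² ≤ 4 · Σ_{i=1}^{n} Π_i²; (iv) Σ_{i=1}^{n} ω_i⁴ ≤ 4 · (max_i P_{ii}) · (Σ_{i=1}^{n} Π_i²)²; (v) for every c ∈ ℝⁿ, |Σ_{i=1}^{n} Σ_{j≠i} c_i P_{ij} c_j| ≤ Σ_{i=1}^{n} c_i². -/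
/-!
Since `P` is symmetric and idempotent, `P i i = (P * P) i i = ∑ j, P i j ^ 2`, which gives the row
identity (i) and, by Cauchy–Schwarz, the bound (ii) on `ω i`. Idempotency also gives
`‖P c‖² = ⟪c, P c⟫ = ‖c‖² - ‖c - P c‖²`, so the quadratic form of `P` lies between `0` and `‖c‖²`.
Writing `ω = P v - diag(P) v` then yields (iii) and, together with (ii), (iv); writing the
off-diagonal form in (v) as `⟪c, P c⟫ - ∑ i, P i i * c i ^ 2`, a difference of two numbers in
`[0, ‖c‖²]`, yields (v).
-/

open Finset

theorem Finset.sum_pow_four_le_mul_sum_sq {ι R : Type*} [CommRing R] [LinearOrder R]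
    [IsStrictOrderedRing R] (s : Finset ι) (x : ι → R) {a : R} (h : ∀ i ∈ s, x i ^ 2 ≤ a) :
    ∑ i ∈ s, x i ^ 4 ≤ a * ∑ i ∈ s, x i ^ 2 := by
  rw [mul_sum]
  refine sum_le_sum fun i hi => ?_
  calc x i ^ 4 = x i ^ 2 * x i ^ 2 := by ring
    _ ≤ a * x i ^ 2 := mul_le_mul_of_nonneg_right (h i hi) (sq_nonneg _)

namespace Matrix

variable {ι R : Type*} [Fintype ι]

theorem dotProduct_self_eq_sum_sq [CommSemiring R] (v : ι → R) : v ⬝ᵥ v = ∑ i, v i ^ 2 := by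
  simp only [dotProduct, sq]

theorem sum_erase_mul_eq_mulVec_sub [DecidableEq ι] [Ring R] (A : Matrix ι ι R) (v : ι → R)
    (i : ι) : ∑ j ∈ univ.erase i, A i j * v j = (A *ᵥ v) i - A i i * v i :=
  sum_erase_eq_sub (mem_univ i)

namespace IsSymm

variable [CommRing R] {P : Matrix ι ι R}

theorem diag_eq_sum_sq (hsym : P.IsSymm) (hidem : IsIdempotentElem P) (i : ι) :
    P i i = ∑ j, P i j ^ 2 := by
  conv_lhs => rw [← hidem.eq, mul_apply]
  exact sum_congr rfl fun j _ => by rw [hsym.apply i j, sq]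

theorem sum_erase_sq_eq [DecidableEq ι] (hsym : P.IsSymm) (hidem : IsIdempotentElem P) (i : ι) :
    ∑ j ∈ univ.erase i, P i j ^ 2 = P i i * (1 - P i i) := by
  rw [sum_erase_eq_sub (mem_univ i), ← hsym.diag_eq_sum_sq hidem i]
  ring

theorem mulVec_dotProduct_mulVec (hsym : P.IsSymm) (hidem : IsIdempotentElem P) (c : ι → R) :
    (P *ᵥ c) ⬝ᵥ (P *ᵥ c) = c ⬝ᵥ (P *ᵥ c) := by
  rw [dotProduct_mulVec, ← mulVec_transpose, hsym.eq, mulVec_mulVec, hidem.eq, dotProduct_comm]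

variable [LinearOrder R] [IsStrictOrderedRing R]

theorem diag_nonneg (hsym : P.IsSymm) (hidem : IsIdempotentElem P) (i : ι) : 0 ≤ P i i := by
  rw [hsym.diag_eq_sum_sq hidem i]
  exact sum_nonneg fun _ _ => sq_nonneg _

theorem dotProduct_mulVec_nonneg (hsym : P.IsSymm) (hidem : IsIdempotentElem P) (c : ι → R) :
    0 ≤ c ⬝ᵥ (P *ᵥ c) := by
  rw [← hsym.mulVec_dotProduct_mulVec hidem, dotProduct_self_eq_sum_sq]
  exact sum_nonneg fun _ _ => sq_nonneg _

theorem dotProduct_mulVec_le (hsym : P.IsSymm) (hidem : IsIdempotentElem P) (c : ι → R) :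
    c ⬝ᵥ (P *ᵥ c) ≤ c ⬝ᵥ c := by
  have hres : 0 ≤ (c - P *ᵥ c) ⬝ᵥ (c - P *ᵥ c) := by
    rw [dotProduct_self_eq_sum_sq]
    exact sum_nonneg fun _ _ => sq_nonneg _
  have hPc := hsym.mulVec_dotProduct_mulVec hidem c
  simp only [sub_dotProduct, dotProduct_sub, dotProduct_comm (P *ᵥ c) c] at hres
  linarith

variable [DecidableEq ι]

theorem diag_le_one (hsym : P.IsSymm) (hidem : IsIdempotentElem P) (i : ι) : P i i ≤ 1 := by
  have hrow := hsym.sum_erase_sq_eq hidem i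
  have hrow_nonneg : 0 ≤ ∑ j ∈ univ.erase i, P i j ^ 2 := sum_nonneg fun _ _ => sq_nonneg _
  nlinarith [hsym.diag_nonneg hidem i]

theorem sum_erase_sq_le_diag (hsym : P.IsSymm) (hidem : IsIdempotentElem P) (i : ι) :
    ∑ j ∈ univ.erase i, P i j ^ 2 ≤ P i i := by
  rw [hsym.sum_erase_sq_eq hidem i]
  nlinarith [sq_nonneg (P i i)]

theorem sq_sum_erase_mul_le (hsym : P.IsSymm) (hidem : IsIdempotentElem P) (v : ι → R) (i : ι) :
    (∑ j ∈ univ.erase i, P i j * v j) ^ 2 ≤ P i i * ∑ j, v j ^ 2 :=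
  calc (∑ j ∈ univ.erase i, P i j * v j) ^ 2
      ≤ (∑ j ∈ univ.erase i, P i j ^ 2) * ∑ j ∈ univ.erase i, v j ^ 2 :=
        sum_mul_sq_le_sq_mul_sq _ _ _
    _ ≤ P i i * ∑ j, v j ^ 2 :=
        mul_le_mul (hsym.sum_erase_sq_le_diag hidem i)
          (sum_le_sum_of_subset_of_nonneg (subset_univ _) fun _ _ _ => sq_nonneg _)
          (sum_nonneg fun _ _ => sq_nonneg _) (hsym.diag_nonneg hidem i)

theorem sum_sq_sum_erase_mul_le (hsym : P.IsSymm) (hidem : IsIdempotentElem P) (v : ι → R) :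
    ∑ i, (∑ j ∈ univ.erase i, P i j * v j) ^ 2 ≤ 4 * ∑ i, v i ^ 2 := by
  -- `(a - b) ^ 2 ≤ 2 a ^ 2 + 2 b ^ 2` with `a = (P v) i` and `b = P i i * v i`, where `|P i i| ≤ 1`
  have hpoint : ∀ i, (∑ j ∈ univ.erase i, P i j * v j) ^ 2 ≤ 2 * (P *ᵥ v) i ^ 2 + 2 * v i ^ 2 := by
    intro i
    have h0 := hsym.diag_nonneg hidem i
    have h1 := hsym.diag_le_one hidem i
    rw [sum_erase_mul_eq_mulVec_sub]
    nlinarith [sq_nonneg ((P *ᵥ v) i + P i i * v i),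
      mul_nonneg (mul_nonneg (sub_nonneg.2 h1) (by linarith : (0 : R) ≤ 1 + P i i))
        (sq_nonneg (v i))]
  have hPv : ∑ i, (P *ᵥ v) i ^ 2 ≤ ∑ i, v i ^ 2 := by
    simpa only [← dotProduct_self_eq_sum_sq, hsym.mulVec_dotProduct_mulVec hidem]
      using hsym.dotProduct_mulVec_le hidem v
  calc ∑ i, (∑ j ∈ univ.erase i, P i j * v j) ^ 2
      ≤ ∑ i, (2 * (P *ᵥ v) i ^ 2 + 2 * v i ^ 2) := sum_le_sum fun i _ => hpoint i
    _ = 2 * ∑ i, (P *ᵥ v) i ^ 2 + 2 * ∑ i, v i ^ 2 := by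
        rw [sum_add_distrib, ← mul_sum, ← mul_sum]
    _ ≤ 4 * ∑ i, v i ^ 2 := by linarith

theorem sum_pow_four_sum_erase_mul_le (hsym : P.IsSymm) (hidem : IsIdempotentElem P)
    (v : ι → R) {p : R} (hp : ∀ i, P i i ≤ p) :
    ∑ i, (∑ j ∈ univ.erase i, P i j * v j) ^ 4 ≤ 4 * p * (∑ i, v i ^ 2) ^ 2 := by
  cases isEmpty_or_nonempty ι with
  | inl _ => simp
  | inr hne =>
    have hv : 0 ≤ ∑ i, v i ^ 2 := sum_nonneg fun _ _ => sq_nonneg _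
    have hp0 : 0 ≤ p := (hsym.diag_nonneg hidem hne.some).trans (hp _)
    calc ∑ i, (∑ j ∈ univ.erase i, P i j * v j) ^ 4
        ≤ (p * ∑ i, v i ^ 2) * ∑ i, (∑ j ∈ univ.erase i, P i j * v j) ^ 2 :=
          sum_pow_four_le_mul_sum_sq _ _ fun i _ =>
            (hsym.sq_sum_erase_mul_le hidem v i).trans (mul_le_mul_of_nonneg_right (hp i) hv)
      _ ≤ (p * ∑ i, v i ^ 2) * (4 * ∑ i, v i ^ 2) :=
          mul_le_mul_of_nonneg_left (hsym.sum_sq_sum_erase_mul_le hidem v) (mul_nonneg hp0 hv)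
      _ = 4 * p * (∑ i, v i ^ 2) ^ 2 := by ring

theorem abs_sum_sum_erase_mul_le (hsym : P.IsSymm) (hidem : IsIdempotentElem P) (c : ι → R) :
    |∑ i, ∑ j ∈ univ.erase i, c i * P i j * c j| ≤ ∑ i, c i ^ 2 := by
  have hsplit : ∑ i, ∑ j ∈ univ.erase i, c i * P i j * c j
      = c ⬝ᵥ (P *ᵥ c) - ∑ i, P i i * c i ^ 2 := by
    simp only [dotProduct, ← sum_sub_distrib, mul_assoc, ← mul_sum, sum_erase_mul_eq_mulVec_sub]
    exact sum_congr rfl fun i _ => by ring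
  have hdiag : ∑ i, P i i * c i ^ 2 ≤ ∑ i, c i ^ 2 :=
    sum_le_sum fun i _ => mul_le_of_le_one_left (sq_nonneg _) (hsym.diag_le_one hidem i)
  have hdiag_nonneg : 0 ≤ ∑ i, P i i * c i ^ 2 :=
    sum_nonneg fun i _ => mul_nonneg (hsym.diag_nonneg hidem i) (sq_nonneg _)
  have hquad := hsym.dotProduct_mulVec_le hidem c
  have hquad_nonneg := hsym.dotProduct_mulVec_nonneg hidem c
  rw [dotProduct_self_eq_sum_sq] at hquad
  rw [hsplit, abs_le]
  constructor <;> linarith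

end IsSymm

end Matrix

/-- deterministic bounds for a symmetric idempotent matrix `P` and the
leave-one-out fitted values `ω_i = ∑_{j≠i} P_{ij} v_j`. -/
theorem stmt_18 (n : ℕ) (P : Matrix (Fin n) (Fin n) ℝ)
    (hsym : P.IsSymm) (hidem : P * P = P)
    (v : Fin n → ℝ) (ω : Fin n → ℝ)
    (hω : ∀ i, ω i = ∑ j ∈ univ.erase i, P i j * v j) :
    (∀ i, (∑ j ∈ univ.erase i, (P i j) ^ 2 = P i i * (1 - P i i)) ∧
        0 ≤ P i i ∧ P i i ≤ 1 ∧ ∑ j ∈ univ.erase i, (P i j) ^ 2 ≤ P i i) ∧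
      (∀ i, (ω i) ^ 2 ≤ P i i * ∑ j, (v j) ^ 2) ∧
      (∑ i, (ω i) ^ 2 ≤ 4 * ∑ i, (v i) ^ 2) ∧
      (∀ p : ℝ, (∀ i, P i i ≤ p) →
        ∑ i, (ω i) ^ 4 ≤ 4 * p * (∑ i, (v i) ^ 2) ^ 2) ∧
      (∀ c : Fin n → ℝ,
        |∑ i, ∑ j ∈ univ.erase i, c i * P i j * c j| ≤ ∑ i, (c i) ^ 2) := by
  obtain rfl : ω = fun i => ∑ j ∈ univ.erase i, P i j * v j := funext hω
  exact ⟨fun i => ⟨hsym.sum_erase_sq_eq hidem i, hsym.diag_nonneg hidem i,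
      hsym.diag_le_one hidem i, hsym.sum_erase_sq_le_diag hidem i⟩,
    hsym.sq_sum_erase_mul_le hidem v, hsym.sum_sq_sum_erase_mul_le hidem v,
    fun _ hp => hsym.sum_pow_four_sum_erase_mul_le hidem v hp,
    hsym.abs_sum_sum_erase_mul_le hidem⟩
end

section
/- Let (Ω, 𝔽, ℙ) be a probability space carrying, for each n, real random variables A_n, B_n, C_n (with C_n the unnormalized cross-fit statistic), and suppose the assumptions of the strong-identification fixed-alternative setting hold: Δ ≠ 0 fixed, d_n → 0, d_n·𝒞_n → C̃ ≠ 0, d_n·(A_n − Δ²𝒞_n) → 0 and d_n·(B_n − Δ𝒞_n) → 0 in probability, estimators Φ̂_n → Φ₁ᵇ > 0 and Ψ̂_n → Ψᵇ > 0 in probability, and AR_n := A_n/√Φ̂_n, LM_n := B_n/√Ψ̂_n. Let (a_{1,n}, a_{2,n}) be sequences in [0,1]² with a_{1,n} + a_{2,n} ≤ 1, let q̃ > 0 and q̄ < q̃ be constants, and let (c_n) be random critical values with ℙ(c_n ≤ q̄) → 1. If a_{1,n} ≥ q̃·Φ₁ᵇ·d_n²/(C̃²·Δ⁴) for all large n,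 then ℙ(a_{1,n}·AR_n² + a_{2,n}·LM_n² ≥ c_n) → 1. -/
open MeasureTheory ProbabilityTheory Filter
open scoped ProbabilityTheory ENNReal

/-!
Write `W_n := q̃ Φ₁ᵇ d_n² AR_n² / (C̃² Δ⁴)`, a lower bound for the test statistic once `a₁ₙ` obeys
the rate condition. Since `d_n A_n = d_n (A_n - Δ² 𝒞_n) + Δ² d_n 𝒞_n → Δ² C̃` and `Φ̂_n → Φ₁ᵇ > 0`
in probability, the continuous mapping theorem gives `d_n AR_n → Δ² C̃ / √Φ₁ᵇ`, hence `W_n → q̃`.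
As `q̃ > q̄` and `c_n ≤ q̄` with probability tending to one, `c_n ≤ W_n` with probability tending
to one.
-/

namespace MeasureTheory

variable {α ι E F G : Type*} [MeasurableSpace α] {μ : Measure α} {l : Filter ι}

theorem tendstoInMeasure_const_of_tendsto_s19 [PseudoEMetricSpace E] {c : ι → E} {a : E}
    (h : Tendsto c l (nhds a)) : TendstoInMeasure μ (fun i _ => c i) l (fun _ => a) := by
  intro ε hε
  refine tendsto_const_nhds.congr' ?_
  filter_upwards [EMetric.tendsto_nhds.mp h ε hε] with i hi
  simp [not_le.mpr hi]

theorem TendstoInMeasure.prodMk_s19 [PseudoEMetricSpace E] [PseudoEMetricSpace F]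
    {f : ι → α → E} {f' : ι → α → F} {g : α → E} {g' : α → F}
    (hf : TendstoInMeasure μ f l g) (hf' : TendstoInMeasure μ f' l g') :
    TendstoInMeasure μ (fun i x => (f i x, f' i x)) l (fun x => (g x, g' x)) := by
  intro ε hε
  refine tendsto_of_tendsto_of_tendsto_of_le_of_le tendsto_const_nhds
    (by simpa using (hf ε hε).add (hf' ε hε)) (fun _ => zero_le) fun i => ?_
  simp only [Prod.edist_eq, le_max_iff, Set.ofPred_or]
  exact measure_union_le _ _

theorem TendstoInMeasure.comp_continuousAt [PseudoEMetricSpace E] [PseudoEMetricSpace G]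
    {f : ι → α → E} {a : E} {φ : E → G} (hf : TendstoInMeasure μ f l (fun _ => a))
    (hφ : ContinuousAt φ a) : TendstoInMeasure μ (fun i x => φ (f i x)) l (fun _ => φ a) := by
  intro ε hε
  obtain ⟨δ, hδ, hφδ⟩ := EMetric.continuousAt_iff.mp hφ ε hε
  refine tendsto_of_tendsto_of_tendsto_of_le_of_le tendsto_const_nhds (hf δ hδ)
    (fun _ => zero_le) fun i => measure_mono fun x hx => ?_
  by_contra hδx
  exact (not_lt.mpr hx) (hφδ (not_le.mp hδx))

theorem tendsto_measure_sdiff_of_tendsto [IsProbabilityMeasure μ] {s t : ι → Set α}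
    (hs : Tendsto (fun i => μ (s i)) l (nhds 1)) (ht : Tendsto (fun i => μ (t i)) l (nhds 0)) :
    Tendsto (fun i => μ (s i \ t i)) l (nhds 1) := by
  have hlow : Tendsto (fun i => μ (s i) - μ (t i)) l (nhds 1) := by
    simpa using ENNReal.Tendsto.sub hs ht (Or.inl ENNReal.one_ne_top)
  exact tendsto_of_tendsto_of_tendsto_of_le_of_le hlow tendsto_const_nhds
    (fun _ => le_measure_sdiff) fun _ => prob_le_one

theorem tendsto_measure_le_of_tendstoInMeasure [IsProbabilityMeasure μ] {c S W : ι → α → ℝ}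
    {q y : ℝ} (hc : Tendsto (fun i => μ {x | c i x ≤ q}) l (nhds 1))
    (hW : TendstoInMeasure μ W l (fun _ => y)) (hqy : q < y)
    (hWS : ∀ᶠ i in l, ∀ x, W i x ≤ S i x) :
    Tendsto (fun i => μ {x | c i x ≤ S i x}) l (nhds 1) := by
  have hgood := tendsto_measure_sdiff_of_tendsto hc
    (tendstoInMeasure_iff_dist.mp hW (y - q) (sub_pos.mpr hqy))
  refine tendsto_of_tendsto_of_tendsto_of_le_of_le' hgood tendsto_const_nhds ?_
    (Eventually.of_forall fun _ => prob_le_one)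
  filter_upwards [hWS] with i hi
  refine measure_mono fun x ⟨hcx, hWx⟩ => ?_
  simp only [Set.mem_ofPred_eq, not_le, Real.dist_eq] at hcx hWx ⊢
  linarith [(abs_lt.mp hWx).1, hi x]

end MeasureTheory

theorem stmt_19_general {Ω : Type*} [MeasureSpace Ω] [IsProbabilityMeasure (ℙ : Measure Ω)]
    (A : ℕ → Ω → ℝ)
    (Δ Ctil : ℝ) (hΔ : Δ ≠ 0) (hCtil : Ctil ≠ 0)
    (d 𝒞 : ℕ → ℝ)
    (hd𝒞 : Tendsto (fun n => d n * 𝒞 n) atTop (nhds Ctil))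
    (hA : TendstoInMeasure ℙ (fun n ω => d n * (A n ω - Δ ^ 2 * 𝒞 n)) atTop (fun _ => 0))
    (Φhat : ℕ → Ω → ℝ)
    (Φb : ℝ) (hΦb : 0 < Φb)
    (hΦ : TendstoInMeasure ℙ Φhat atTop (fun _ => Φb))
    (AR LM : ℕ → Ω → ℝ)
    (hAR : AR = fun n ω => A n ω / Real.sqrt (Φhat n ω))
    (a₁ a₂ : ℕ → ℝ)
    (ha₂ : ∀ n, a₂ n ∈ Set.Icc (0 : ℝ) 1)
    (qtil qbar : ℝ) (hqq : qbar < qtil)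
    (crit : ℕ → Ω → ℝ)
    (hcrit : Tendsto (fun n => ℙ {ω | crit n ω ≤ qbar}) atTop (nhds 1))
    (hlow : ∀ᶠ n in atTop, qtil * Φb * (d n) ^ 2 / (Ctil ^ 2 * Δ ^ 4) ≤ a₁ n) :
    Tendsto (fun n => ℙ {ω |
        crit n ω ≤ a₁ n * (AR n ω) ^ 2 + a₂ n * (LM n ω) ^ 2}) atTop (nhds 1) := by
  subst hAR
  set k := qtil * Φb / (Ctil ^ 2 * Δ ^ 4)
  have hdA : TendstoInMeasure ℙ (fun n ω => d n * A n ω) atTop (fun _ => Δ ^ 2 * Ctil) := by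
    have := (hA.prodMk_s19 (tendstoInMeasure_const_of_tendsto_s19 hd𝒞)).comp_continuousAt
      (φ := fun p : ℝ × ℝ => p.1 + Δ ^ 2 * p.2) (by fun_prop)
    convert this using 3 with n ω
    · dsimp only
      ring
    · simp
  have hW : TendstoInMeasure ℙ (fun n ω => k * (d n * A n ω / √(Φhat n ω)) ^ 2) atTop
      (fun _ => qtil) := by
    have := (hdA.prodMk_s19 hΦ).comp_continuousAt (φ := fun p : ℝ × ℝ => k * (p.1 / √p.2) ^ 2)
      (by fun_prop (disch := positivity))
    convert this using 2
    simp only [k]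
    field_simp
    rw [Real.sq_sqrt hΦb.le]
  refine tendsto_measure_le_of_tendstoInMeasure hcrit hW hqq ?_
  filter_upwards [hlow] with n hn ω
  calc k * (d n * A n ω / √(Φhat n ω)) ^ 2
      = qtil * Φb * d n ^ 2 / (Ctil ^ 2 * Δ ^ 4) * (A n ω / √(Φhat n ω)) ^ 2 := by ring
    _ ≤ a₁ n * (A n ω / √(Φhat n ω)) ^ 2 := by gcongr
    _ ≤ _ := le_add_of_nonneg_right (mul_nonneg (ha₂ n).1 (sq_nonneg _))

/-- core of Theorems 1(iii) and 5 of the paper: under strong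
identification with a fixed alternative, if the weight on the squared jackknife AR
statistic satisfies `a₁ₙ ≥ q̃Φ₁ᵇd_n²/(C̃²Δ⁴)` with `q̃ > q̄` and the random critical
values satisfy `ℙ(c_n ≤ q̄) → 1`, then the linear combination test rejects with
probability tending to one. -/
theorem stmt_19 {Ω : Type*} [MeasureSpace Ω] [IsProbabilityMeasure (ℙ : Measure Ω)]
    (A B C : ℕ → Ω → ℝ)
    (hmeas : ∀ n, Measurable (A n) ∧ Measurable (B n) ∧ Measurable (C n))
    (Δ Ctil : ℝ) (hΔ : Δ ≠ 0) (hCtil : Ctil ≠ 0)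
    (d 𝒞 : ℕ → ℝ) (hd : Tendsto d atTop (nhds 0))
    (hd𝒞 : Tendsto (fun n => d n * 𝒞 n) atTop (nhds Ctil))
    (hA : TendstoInMeasure ℙ (fun n ω => d n * (A n ω - Δ ^ 2 * 𝒞 n)) atTop (fun _ => 0))
    (hB : TendstoInMeasure ℙ (fun n ω => d n * (B n ω - Δ * 𝒞 n)) atTop (fun _ => 0))
    (Φhat Ψhat : ℕ → Ω → ℝ)
    (hmeas' : ∀ n, Measurable (Φhat n) ∧ Measurable (Ψhat n))
    (Φb Ψb : ℝ) (hΦb : 0 < Φb) (hΨb : 0 < Ψb)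
    (hΦ : TendstoInMeasure ℙ Φhat atTop (fun _ => Φb))
    (hΨ : TendstoInMeasure ℙ Ψhat atTop (fun _ => Ψb))
    (AR LM : ℕ → Ω → ℝ)
    (hAR : AR = fun n ω => A n ω / Real.sqrt (Φhat n ω))
    (hLM : LM = fun n ω => B n ω / Real.sqrt (Ψhat n ω))
    (a₁ a₂ : ℕ → ℝ)
    (ha₁ : ∀ n, a₁ n ∈ Set.Icc (0 : ℝ) 1) (ha₂ : ∀ n, a₂ n ∈ Set.Icc (0 : ℝ) 1)
    (hsum : ∀ n, a₁ n + a₂ n ≤ 1)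
    (qtil qbar : ℝ) (hqtil : 0 < qtil) (hqq : qbar < qtil)
    (crit : ℕ → Ω → ℝ) (hcritm : ∀ n, Measurable (crit n))
    (hcrit : Tendsto (fun n => ℙ {ω | crit n ω ≤ qbar}) atTop (nhds 1))
    (hlow : ∀ᶠ n in atTop, qtil * Φb * (d n) ^ 2 / (Ctil ^ 2 * Δ ^ 4) ≤ a₁ n) :
    Tendsto (fun n => ℙ {ω |
        crit n ω ≤ a₁ n * (AR n ω) ^ 2 + a₂ n * (LM n ω) ^ 2}) atTop (nhds 1) :=
  stmt_19_general A Δ Ctil hΔ hCtil d 𝒞 hd𝒞 hA Φhat Φb hΦb hΦ AR LM hAR a₁ a₂ ha₂ qtil qbar hqq crit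
    hcrit hlow
end
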